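/- arXiv:1612.07242 — 9 statements merged into one kernel-verified Lean document; each statement's English description precedes it below -/
import Mathlib

section
/- Let m > n ≥ 2 be integers that are both odd. Then the infimum of the set of values (n·sin t − sin(n t))/(m·sin t − sin(m t)) as t ranges over the open interval (0, π) equals (n³ − n)/(m³ − m). -/
/-!
For odd `n = 2a + 1` one has `n sin t - sin (n t) = 4 sin t · ∑_{j=1}^{a} sin² (j t)` and
`n³ - n = 24 ∑_{j=1}^{a} j²`, so with `T_r(t) = ∑_{j=1}^{r} sin² (j t)` and `W_r = ∑_{j=1}^{r} j²`
the quotient is `T_a(t) / T_b(t)` and the claimed value is `W_a / W_b`. Since `T_r(t) ~ W_r t²` as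
`t → 0`, the quotient tends to `W_a / W_b`, and it remains to see that `T_r / W_r` is nonincreasing
in `r`, i.e. `W_r sin² ((r+1) t) ≤ (r+1)² T_r(t)`. For `(r+1) t ≤ π` this holds termwise, because
`sin x / x` decreases on `(0, π]` by concavity of `sin`; the case `(r+1)(π - t) ≤ π` follows by
the symmetry `t ↦ π - t`; in between, Jordan's inequality gives `sin t ≥ 2 / (r+1)`, which with the
identity above already yields `W_r ≤ (r+1)² T_r(t)`.
-/

open Real Filter Set Topology

noncomputable def sinSqSum (r : ℕ) (t : ℝ) : ℝ := ∑ j ∈ Finset.Icc 1 r, sin (j * t) ^ 2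

noncomputable def sqSum (r : ℕ) : ℝ := ∑ j ∈ Finset.Icc 1 r, (j : ℝ) ^ 2

lemma sinSqSum_succ (r : ℕ) (t : ℝ) :
    sinSqSum (r + 1) t = sinSqSum r t + sin ((r + 1) * t) ^ 2 := by
  rw [sinSqSum, Finset.sum_Icc_succ_top (by omega), ← sinSqSum]
  push_cast; rfl

lemma sqSum_succ (r : ℕ) : sqSum (r + 1) = sqSum r + ((r : ℝ) + 1) ^ 2 := by
  rw [sqSum, Finset.sum_Icc_succ_top (by omega), ← sqSum]
  push_cast; rfl

lemma six_mul_sqSum (r : ℕ) : 6 * sqSum r = r * (r + 1) * (2 * r + 1) := by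
  induction r with
  | zero => simp [sqSum]
  | succ r ih => rw [sqSum_succ, mul_add, ih]; push_cast; ring

lemma sqSum_pos {r : ℕ} (hr : 0 < r) : 0 < sqSum r :=
  Finset.sum_pos' (fun _ _ ↦ sq_nonneg _) ⟨1, Finset.mem_Icc.2 ⟨le_rfl, hr⟩, by norm_num⟩

lemma sinSqSum_pos {r : ℕ} (hr : 0 < r) {t : ℝ} (ht₀ : 0 < t) (htπ : t < π) :
    0 < sinSqSum r t :=
  Finset.sum_pos' (fun _ _ ↦ sq_nonneg _)
    ⟨1, Finset.mem_Icc.2 ⟨le_rfl, hr⟩, by simpa using pow_pos (sin_pos_of_pos_of_lt_pi ht₀ htπ) 2⟩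

lemma odd_mul_sin_sub_sin_odd_mul (r : ℕ) (t : ℝ) :
    (2 * r + 1) * sin t - sin ((2 * r + 1) * t) = 4 * sin t * sinSqSum r t := by
  induction r with
  | zero => simp [sinSqSum]
  | succ r ih =>
    have hdiff : sin ((2 * (r + 1) + 1) * t) - sin ((2 * r + 1) * t) =
        2 * cos (2 * ((r + 1) * t)) * sin t := by
      rw [show (2 * (r + 1) + 1) * t = 2 * ((r + 1) * t) + t by ring,
        show (2 * r + 1) * t = 2 * ((r + 1) * t) - t by ring, sin_add, sin_sub]
      ring
    rw [sinSqSum_succ]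
    push_cast
    linear_combination ih - hdiff - 2 * sin t * cos_two_mul_eq_one_sub ((r + 1) * t)

lemma mul_sin_mul_le_mul_sin_mul {a b t : ℝ} (ha : 0 ≤ a) (hab : a ≤ b) (ht : 0 ≤ t)
    (hbt : b * t ≤ π) : a * sin (b * t) ≤ b * sin (a * t) := by
  rcases hab.eq_or_lt with rfl | hab
  · rfl
  have hb : 0 < b := ha.trans_lt hab
  have hconc := strictConcaveOn_sin_Icc.concaveOn.2 (⟨le_rfl, pi_pos.le⟩ : (0 : ℝ) ∈ Icc 0 π)
    (⟨by positivity, hbt⟩ : b * t ∈ Icc 0 π)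
    (by rw [sub_nonneg, div_le_one hb]; exact hab.le : 0 ≤ 1 - a / b)
    (by positivity : 0 ≤ a / b) (by ring)
  have hat : a / b * (b * t) = a * t := by field_simp
  simp only [smul_eq_mul, mul_zero, sin_zero, zero_add, hat] at hconc
  rwa [div_mul_eq_mul_div, div_le_iff₀' hb] at hconc

lemma sin_sq_mul_pi_sub (k : ℕ) (t : ℝ) : sin (k * (π - t)) ^ 2 = sin (k * t) ^ 2 := by
  rw [mul_sub, sin_nat_mul_pi_sub, neg_sq, mul_pow, ← pow_mul, mul_comm k 2, pow_mul]
  norm_num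

lemma sinSqSum_pi_sub (r : ℕ) (t : ℝ) : sinSqSum r (π - t) = sinSqSum r t :=
  Finset.sum_congr rfl fun j _ ↦ sin_sq_mul_pi_sub j t

lemma sqSum_mul_sin_sq_le_of_mul_le_pi {r : ℕ} {t : ℝ} (ht : 0 ≤ t) (hrt : (r + 1) * t ≤ π) :
    sqSum r * sin ((r + 1) * t) ^ 2 ≤ (r + 1) ^ 2 * sinSqSum r t := by
  have hterm (j : ℕ) (hj : j ∈ Finset.Icc 1 r) :
      (j : ℝ) ^ 2 * sin ((r + 1) * t) ^ 2 ≤ (r + 1) ^ 2 * sin (j * t) ^ 2 := by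
    have hjr : (j : ℝ) ≤ r + 1 := by
      have := (Finset.mem_Icc.1 hj).2; exact_mod_cast this.trans r.le_succ
    have hsin : 0 ≤ sin ((r + 1) * t) := sin_nonneg_of_nonneg_of_le_pi (by positivity) hrt
    rw [← mul_pow, ← mul_pow]
    exact pow_le_pow_left₀ (by positivity)
      (mul_sin_mul_le_mul_sin_mul j.cast_nonneg hjr ht hrt) 2
  rw [sqSum, sinSqSum, Finset.sum_mul, Finset.mul_sum]
  exact Finset.sum_le_sum hterm

lemma sqSum_le_sq_mul_sinSqSum {r : ℕ} {t : ℝ} (hsin : 2 / (r + 1) ≤ sin t) :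
    sqSum r ≤ (r + 1) ^ 2 * sinSqSum r t := by
  have hK : (0 : ℝ) < r + 1 := by positivity
  have hs : 0 < sin t := (by positivity : (0 : ℝ) < 2 / (r + 1)).trans_le hsin
  have hsK : 2 ≤ sin t * (r + 1) := by rwa [div_le_iff₀ hK] at hsin
  have hid := odd_mul_sin_sub_sin_odd_mul r t
  have hW := six_mul_sqSum r
  have hsin1 := sin_le_one ((2 * r + 1) * t)
  refine le_of_mul_le_mul_left ?_ (by positivity : 0 < 4 * sin t)
  nlinarith [r.cast_nonneg (α := ℝ)]

lemma sqSum_mul_sin_sq_le {r : ℕ} {t : ℝ} (ht₀ : 0 ≤ t) (htπ : t ≤ π) :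
    sqSum r * sin ((r + 1) * t) ^ 2 ≤ (r + 1) ^ 2 * sinSqSum r t := by
  have hK : (0 : ℝ) < r + 1 := by positivity
  by_cases hleft : (r + 1) * t ≤ π
  · exact sqSum_mul_sin_sq_le_of_mul_le_pi ht₀ hleft
  by_cases hright : (r + 1) * (π - t) ≤ π
  · have h := sqSum_mul_sin_sq_le_of_mul_le_pi (sub_nonneg.2 htπ) hright
    rwa [sinSqSum_pi_sub, ← Nat.cast_succ, sin_sq_mul_pi_sub, Nat.cast_succ] at h
  push Not at hleft hright
  have hjordan {x : ℝ} (hx : π < (r + 1) * x) (hx' : x ≤ π / 2) : 2 / (r + 1) ≤ sin x := by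
    refine le_trans ?_ (mul_le_sin (by nlinarith) hx')
    have h : 2 / π * π ≤ 2 / π * ((r + 1) * x) := by gcongr
    rw [div_mul_cancel₀ _ pi_ne_zero] at h
    rw [div_le_iff₀ hK]
    linarith
  have hsin : 2 / (r + 1) ≤ sin t := by
    rcases le_total t (π / 2) with h | h
    · exact hjordan hleft h
    · rw [← sin_pi_sub]; exact hjordan hright (by linarith)
  calc sqSum r * sin ((r + 1) * t) ^ 2 ≤ sqSum r * 1 :=
        mul_le_mul_of_nonneg_left (sin_sq_le_one _) (Finset.sum_nonneg fun _ _ ↦ sq_nonneg _)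
    _ ≤ (r + 1) ^ 2 * sinSqSum r t := (mul_one _).trans_le (sqSum_le_sq_mul_sinSqSum hsin)

lemma sqSum_mul_sinSqSum_le {r s : ℕ} (hrs : r ≤ s) {t : ℝ} (ht₀ : 0 < t) (htπ : t < π) :
    sqSum r * sinSqSum s t ≤ sinSqSum r t * sqSum s := by
  rcases r.eq_zero_or_pos with rfl | hr
  · simp [sqSum, sinSqSum]
  induction s, hrs using Nat.le_induction with
  | base => rw [mul_comm]
  | succ s hrs ih =>
    have hstep := sqSum_mul_sin_sq_le (r := s) ht₀.le htπ.le
    have hs : 0 < sqSum s := sqSum_pos (hr.trans_le hrs)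
    rw [sinSqSum_succ, sqSum_succ]
    refine le_of_mul_le_mul_left ?_ hs
    linear_combination mul_le_mul_of_nonneg_left ih hs.le + (s + 1) ^ 2 * ih +
      mul_le_mul_of_nonneg_left hstep (sqSum_pos hr).le

lemma sinSqSum_eq_sq_mul_sum_sinc (r : ℕ) (t : ℝ) :
    sinSqSum r t = t ^ 2 * ∑ j ∈ Finset.Icc 1 r, (j * sinc (j * t)) ^ 2 := by
  rcases eq_or_ne t 0 with rfl | ht
  · simp [sinSqSum]
  rw [sinSqSum, Finset.mul_sum]
  refine Finset.sum_congr rfl fun j hj ↦ ?_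
  have hj : (j : ℝ) ≠ 0 := by have := (Finset.mem_Icc.1 hj).1; positivity
  rw [sinc_of_ne_zero (mul_ne_zero hj ht)]
  field_simp

lemma tendsto_sinSqSum_div (r : ℕ) {s : ℕ} (hs : 0 < s) :
    Tendsto (fun t ↦ sinSqSum r t / sinSqSum s t) (𝓝[≠] 0) (𝓝 (sqSum r / sqSum s)) := by
  let g (k : ℕ) (t : ℝ) : ℝ := ∑ j ∈ Finset.Icc 1 k, (j * sinc (j * t)) ^ 2
  have hg (k : ℕ) : Continuous (g k) := by fun_prop
  have hg0 (k : ℕ) : g k 0 = sqSum k := by simp [g, sqSum]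
  have hlim : Tendsto (fun t ↦ g r t / g s t) (𝓝 0) (𝓝 (sqSum r / sqSum s)) := by
    rw [← hg0, ← hg0]
    exact ((hg r).tendsto 0).div ((hg s).tendsto 0) (hg0 s ▸ (sqSum_pos hs).ne')
  refine (hlim.mono_left nhdsWithin_le_nhds).congr' ?_
  filter_upwards [self_mem_nhdsWithin] with t ht
  rw [sinSqSum_eq_sq_mul_sum_sinc, sinSqSum_eq_sq_mul_sum_sinc,
    mul_div_mul_left _ _ (pow_ne_zero 2 ht)]

lemma isGLB_sinSqSum_div {r s : ℕ} (hrs : r ≤ s) (hs : 0 < s) :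
    IsGLB ((fun t ↦ sinSqSum r t / sinSqSum s t) '' Ioo 0 π) (sqSum r / sqSum s) := by
  refine isGLB_of_mem_closure ?_ ?_
  · rintro _ ⟨t, ⟨ht₀, htπ⟩, rfl⟩
    rw [div_le_div_iff₀ (sqSum_pos hs) (sinSqSum_pos hs ht₀ htπ)]
    exact sqSum_mul_sinSqSum_le hrs ht₀ htπ
  · have hlim : Tendsto (fun t ↦ sinSqSum r t / sinSqSum s t) (𝓝[>] 0) (𝓝 (sqSum r / sqSum s)) :=
      (tendsto_sinSqSum_div r hs).mono_left (nhdsWithin_mono _ fun t (ht : 0 < t) ↦ ht.ne')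
    refine mem_closure_of_tendsto hlim ?_
    filter_upwards [Ioo_mem_nhdsGT pi_pos] with t ht using mem_image_of_mem _ ht

lemma odd_pow_three_sub_self (r : ℕ) : (2 * r + 1 : ℝ) ^ 3 - (2 * r + 1) = 24 * sqSum r := by
  linear_combination (-4) * six_mul_sqSum r

theorem stmt_0_general (m n : ℕ) (hnm : n < m) (hmo : Odd m) (hno : Odd n) :
    sInf ((fun t : ℝ =>
        ((n : ℝ) * Real.sin t - Real.sin ((n : ℝ) * t)) /
          ((m : ℝ) * Real.sin t - Real.sin ((m : ℝ) * t))) '' Set.Ioo 0 π) =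
      ((n : ℝ) ^ 3 - n) / ((m : ℝ) ^ 3 - m) := by
  obtain ⟨a, rfl⟩ := hno
  obtain ⟨b, rfl⟩ := hmo
  have hab : a ≤ b := by omega
  have hb : 0 < b := by omega
  push_cast
  rw [odd_pow_three_sub_self, odd_pow_three_sub_self, mul_div_mul_left _ _ (by norm_num)]
  have hset : ((fun t : ℝ ↦ ((2 * a + 1) * sin t - sin ((2 * a + 1) * t)) /
      ((2 * b + 1) * sin t - sin ((2 * b + 1) * t))) '' Ioo 0 π) =
      (fun t ↦ sinSqSum a t / sinSqSum b t) '' Ioo 0 π := by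
    refine image_congr fun t ⟨ht₀, htπ⟩ ↦ ?_
    rw [odd_mul_sin_sub_sin_odd_mul, odd_mul_sin_sub_sin_odd_mul,
      mul_div_mul_left _ _ (by linarith [sin_pos_of_pos_of_lt_pi ht₀ htπ])]
  rw [hset]
  exact (isGLB_sinSqSum_div hab hb).csInf_eq ((nonempty_Ioo.2 pi_pos).image _)

theorem stmt_0 (m n : ℕ) (hn : 2 ≤ n) (hnm : n < m) (hmo : Odd m) (hno : Odd n) :
    sInf ((fun t : ℝ =>
        ((n : ℝ) * Real.sin t - Real.sin ((n : ℝ) * t)) /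
          ((m : ℝ) * Real.sin t - Real.sin ((m : ℝ) * t))) '' Set.Ioo 0 π) =
      ((n : ℝ) ^ 3 - n) / ((m : ℝ) ^ 3 - m) :=
  stmt_0_general m n hnm hmo hno
end

section
/- Let m > n ≥ 2 be integers that are both even. Then the infimum of the set of values (n·sin t − sin(n t))/(m·sin t − sin(m t)) as t ranges over the open interval (0, π) equals (n³ − n)/(m³ − m). -/
open Real Filter Topology Set

/-!
Write `n = 2p`, `S_p(x) = ∑_{i<p} sin² ((2i+1)x)` and `Q_p = ∑_{i<p} (2i+1)² = (n³ - n)/6`.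
The numerator telescopes to `n sin t - sin (n t) = 4 sin t · S_p(t/2)`, so the quotient is
`S_p(x) / S_q(x)` with `x = t/2 ∈ (0, π/2)`; it tends to `Q_p / Q_q` as `x → 0`.
The lower bound `Q_p S_q(x) ≤ Q_q S_p(x)` reduces to `Q_p sin² (l x) ≤ l² S_p(x)` for odd `l ≥ 2p`.
For `x ≤ π/(4p)` this holds term by term, because `sin y / y` decreases on `(0, π]`. For larger `x`
it follows from `Q_p ≤ 4p² S_p(x)`, which by the identity is the Fejér-type bound
`sin (2pt) ≤ (2p² + 1)/(3p) · sin t` for `t ∈ (π/(2p), π)`.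
-/

noncomputable def oddSinSqSum (p : ℕ) (x : ℝ) : ℝ :=
  ∑ i ∈ Finset.range p, sin ((2 * i + 1) * x) ^ 2

noncomputable def oddSqSum (p : ℕ) : ℝ :=
  ∑ i ∈ Finset.range p, (2 * (i : ℝ) + 1) ^ 2

lemma six_mul_oddSqSum (p : ℕ) : 6 * oddSqSum p = (2 * p) ^ 3 - 2 * p := by
  induction p with
  | zero => simp [oddSqSum]
  | succ p ih =>
    rw [oddSqSum, Finset.sum_range_succ, ← oddSqSum]
    push_cast
    linear_combination ih

lemma oddSqSum_pos {p : ℕ} (hp : 0 < p) : 0 < oddSqSum p :=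
  Finset.sum_pos (fun _ _ ↦ by positivity) (Finset.nonempty_range_iff.2 hp.ne')

lemma oddSinSqSum_nonneg (p : ℕ) (x : ℝ) : 0 ≤ oddSinSqSum p x :=
  Finset.sum_nonneg fun _ _ ↦ sq_nonneg _

lemma oddSinSqSum_pos {p : ℕ} (hp : 0 < p) {x : ℝ} (hx : 0 < x) (hxπ : x < π) :
    0 < oddSinSqSum p x := by
  have h := Finset.single_le_sum (f := fun i : ℕ ↦ sin ((2 * i + 1) * x) ^ 2)
    (fun _ _ ↦ sq_nonneg _) (Finset.mem_range.2 hp)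
  have := sin_pos_of_pos_of_lt_pi hx hxπ
  simp only [CharP.cast_eq_zero, mul_zero, zero_add, one_mul] at h
  exact (by positivity : 0 < sin x ^ 2).trans_le h

lemma two_mul_sin_sub_sin_eq (p : ℕ) (t : ℝ) :
    2 * p * sin t - sin (2 * p * t) = 4 * sin t * oddSinSqSum p (t / 2) := by
  induction p with
  | zero => simp [oddSinSqSum]
  | succ p ih =>
    rw [oddSinSqSum, Finset.sum_range_succ, ← oddSinSqSum]
    set y := (2 * (p : ℝ) + 1) * (t / 2)
    have hcos : cos (2 * y) = 1 - 2 * sin y ^ 2 := by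
      rw [cos_two_mul, cos_sq']; ring
    have hadd : sin (2 * (p + 1 : ℕ) * t) = sin (2 * y + t) := by congr 1; push_cast; ring
    have hsub : sin (2 * p * t) = sin (2 * y - t) := by congr 1; ring
    rw [hadd, sin_add]
    rw [hsub, sin_sub] at ih
    push_cast
    linear_combination ih - 2 * sin t * hcos

lemma sin_mul_le_sin_mul {a b : ℝ} (ha : 0 < a) (hab : a ≤ b) (hb : b ≤ π) :
    sin b * a ≤ sin a * b := by
  have hb0 : 0 < b := ha.trans_le hab
  have h := strictConcaveOn_sin_Icc.concaveOn.neg.secant_mono (a := 0)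
    ⟨le_rfl, pi_pos.le⟩ ⟨ha.le, hab.trans hb⟩ ⟨hb0.le, hb⟩ ha.ne' hb0.ne' hab
  simp only [Pi.neg_apply, sin_zero, neg_zero, sub_zero, neg_div, neg_le_neg_iff] at h
  rwa [div_le_div_iff₀ hb0 ha] at h

lemma abs_sin_mul_le_sin_mul {a b : ℝ} (ha : 0 < a) (ha' : a ≤ π / 2) (hab : a ≤ b) :
    |sin b| * a ≤ sin a * b := by
  rcases le_or_gt b π with hbπ | hbπ
  · rw [abs_of_nonneg (sin_nonneg_of_nonneg_of_le_pi (ha.le.trans hab) hbπ)]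
    exact sin_mul_le_sin_mul ha hab hbπ
  · -- Jordan's inequality `sin a ≥ 2a/π` makes the right side at least `2a`
    have hjordan := mul_le_sin ha.le ha'
    have hsin : 0 ≤ sin a := sin_nonneg_of_nonneg_of_le_pi ha.le (by linarith [pi_pos])
    have h2a : 2 * a ≤ sin a * b := calc
      2 * a = 2 / π * a * π := by field_simp
      _ ≤ sin a * b := mul_le_mul hjordan hbπ.le pi_pos.le hsin
    nlinarith [abs_sin_le_one b]

lemma sin_le_sin_of_le_of_le_pi_sub {s t : ℝ} (hs : 0 ≤ s) (hs' : s ≤ π / 2) (hst : s ≤ t)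
    (hts : t ≤ π - s) : sin s ≤ sin t := by
  rcases le_or_gt t (π / 2) with ht | ht
  · exact sin_le_sin_of_le_of_le_pi_div_two (by linarith) ht hst
  · rw [← sin_pi_sub t]
    exact sin_le_sin_of_le_of_le_pi_div_two (by linarith) (by linarith) (by linarith)

lemma three_mul_div_le_sin_pi_div {p : ℕ} (hp : 0 < p) :
    3 * p / (2 * p ^ 2 + 1) ≤ sin (π / (2 * p)) := by
  obtain rfl | hp2 := (Nat.one_le_iff_ne_zero.2 hp.ne').eq_or_lt
  · norm_num
  have hP : (2 : ℝ) ≤ p := by exact_mod_cast hp2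
  set P : ℝ := (p : ℝ)
  have hπ := pi_gt_d2
  have hπ' := pi_lt_d2
  have hπ3 : π ^ 3 < 31.3 := by
    have := pow_lt_pow_left₀ hπ' pi_pos.le three_ne_zero
    norm_num at this; linarith
  -- `sin u > u - u³/6` at `u = π/(2p)`; the resulting polynomial inequality holds for `p ≥ 2`
  have hcube : π / (2 * P) - (π / (2 * P)) ^ 3 / 6 = (24 * π * P ^ 2 - π ^ 3) / (48 * P ^ 3) := by
    field_simp; ring
  have hpoly : 3 * P * (48 * P ^ 3) ≤ (24 * π * P ^ 2 - π ^ 3) * (2 * P ^ 2 + 1) := by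
    have hP2 : 4 ≤ P ^ 2 := by nlinarith
    nlinarith [mul_nonneg (sub_nonneg.2 hπ.le) (by positivity : (0:ℝ) ≤ P ^ 4),
      mul_nonneg (sub_nonneg.2 hπ3.le) (by positivity : (0:ℝ) ≤ P ^ 2)]
  refine le_trans ?_ (sin_gt_sub_cube (by positivity)).le
  rw [hcube, div_le_div_iff₀ (by positivity) (by positivity)]
  linarith

lemma sin_two_mul_nat_mul_le {p : ℕ} (hp : 0 < p) {t : ℝ} (ht : π / (2 * p) < t) (htπ : t < π) :
    sin (2 * p * t) * (3 * p) ≤ (2 * p ^ 2 + 1) * sin t := by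
  have hP : (1 : ℝ) ≤ p := by exact_mod_cast hp
  have hu : 0 < π / (2 * p) := by positivity
  have hsin : 0 ≤ sin t := sin_nonneg_of_nonneg_of_le_pi (hu.trans ht).le htπ.le
  rcases le_or_gt t (π - π / (2 * p)) with hmid | hend
  · have hlow : 3 * p ≤ (2 * p ^ 2 + 1) * sin t := by
      have hu' : π / (2 * p) ≤ π / 2 := div_le_div_of_nonneg_left pi_pos.le two_pos (by linarith)
      have := (three_mul_div_le_sin_pi_div hp).trans
        (sin_le_sin_of_le_of_le_pi_sub hu.le hu' ht.le hmid)
      rw [div_le_iff₀ (by positivity)] at this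
      linarith
    nlinarith [sin_le_one (2 * p * t)]
  · -- near `π`, `2pt` lies within `π` below a multiple of `2π`, so `sin (2pt) ≤ 0`
    have hper : sin (2 * p * t) = sin (2 * p * (t - π)) := by
      rw [← sin_add_nat_mul_two_pi (2 * p * (t - π)) p]; ring_nf
    have hneg : sin (2 * p * (t - π)) ≤ 0 := by
      have h2p : 2 * p * (π / (2 * p)) = π := by field_simp
      apply sin_nonpos_of_nonpos_of_neg_pi_le
      · nlinarith
      · nlinarith [mul_lt_mul_of_pos_left (by linarith : π - t < π / (2 * p))
          (by positivity : (0 : ℝ) < 2 * p)]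
    rw [hper]
    nlinarith

lemma oddSqSum_le_mul_oddSinSqSum {p : ℕ} (hp : 0 < p) {x : ℝ} (hx : π / (4 * p) < x)
    (hx' : x < π / 2) : oddSqSum p ≤ 4 * p ^ 2 * oddSinSqSum p x := by
  have h2x : π / (2 * p) < 2 * x := by
    rw [div_lt_iff₀ (by positivity)] at hx ⊢; linarith
  have hB := sin_two_mul_nat_mul_le hp h2x (by linarith)
  have hid := two_mul_sin_sub_sin_eq p (2 * x)
  rw [mul_div_cancel_left₀ x two_ne_zero] at hid
  have h6 := six_mul_oddSqSum p
  have hs : 0 < sin (2 * x) :=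
    sin_pos_of_pos_of_lt_pi (by linarith [hx.trans' (by positivity)]) (by linarith)
  have key : 6 * sin (2 * x) * (4 * p ^ 2 * oddSinSqSum p x - oddSqSum p)
      = 2 * p * ((2 * p ^ 2 + 1) * sin (2 * x) - sin (2 * p * (2 * x)) * (3 * p)) := by
    linear_combination (-6 * (p : ℝ) ^ 2) * hid - sin (2 * x) * h6
  nlinarith

lemma oddSqSum_mul_sin_sq_le {p l : ℕ} (hl : 2 * p ≤ l) {x : ℝ} (hx : 0 < x) (hx' : x < π / 2) :
    oddSqSum p * sin (l * x) ^ 2 ≤ l ^ 2 * oddSinSqSum p x := by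
  rcases p.eq_zero_or_pos with rfl | hp
  · simp [oddSqSum, oddSinSqSum]
  have hP : (1 : ℝ) ≤ p := by exact_mod_cast hp
  have hl' : 2 * (p : ℝ) ≤ l := by exact_mod_cast hl
  rcases le_or_gt x (π / (4 * p)) with hsmall | hlarge
  · -- termwise: `sin (l x)² (2i+1)² ≤ l² sin ((2i+1)x)²` since `(2i+1)x ≤ π/2`
    rw [oddSqSum, oddSinSqSum, Finset.sum_mul, Finset.mul_sum]
    refine Finset.sum_le_sum fun i hi ↦ ?_
    have hi : (i : ℝ) + 1 ≤ p := by exact_mod_cast Finset.mem_range.1 hi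
    have ha : 0 < (2 * (i : ℝ) + 1) * x := by positivity
    have ha' : (2 * (i : ℝ) + 1) * x ≤ π / 2 := calc
      (2 * (i : ℝ) + 1) * x ≤ 2 * p * x := by gcongr; linarith
      _ ≤ 2 * p * (π / (4 * p)) := by gcongr
      _ = π / 2 := by field_simp; ring
    have hab : (2 * (i : ℝ) + 1) * x ≤ l * x := by gcongr; linarith
    have h := pow_le_pow_left₀ (by positivity) (abs_sin_mul_le_sin_mul ha ha' hab) 2
    rw [mul_pow, mul_pow, sq_abs] at h
    nlinarith [pow_pos hx 2]
  · have hS := oddSinSqSum_nonneg p x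
    calc oddSqSum p * sin (l * x) ^ 2 ≤ oddSqSum p :=
          mul_le_of_le_one_right (oddSqSum_pos hp).le (sin_sq_le_one _)
      _ ≤ 4 * p ^ 2 * oddSinSqSum p x := oddSqSum_le_mul_oddSinSqSum hp hlarge hx'
      _ ≤ l ^ 2 * oddSinSqSum p x := by gcongr; nlinarith

lemma oddSqSum_mul_oddSinSqSum_le {p q : ℕ} (hpq : p ≤ q) {x : ℝ} (hx : 0 < x)
    (hx' : x < π / 2) : oddSqSum p * oddSinSqSum q x ≤ oddSqSum q * oddSinSqSum p x := by
  have hS : oddSinSqSum q x =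
      oddSinSqSum p x + ∑ i ∈ Finset.Ico p q, sin ((2 * i + 1) * x) ^ 2 :=
    (Finset.sum_range_add_sum_Ico _ hpq).symm
  have hQ : oddSqSum q = oddSqSum p + ∑ i ∈ Finset.Ico p q, (2 * (i : ℝ) + 1) ^ 2 :=
    (Finset.sum_range_add_sum_Ico _ hpq).symm
  rw [hS, hQ, mul_add, add_mul, Finset.mul_sum, Finset.sum_mul, mul_comm (oddSqSum p)]
  refine add_le_add le_rfl (Finset.sum_le_sum fun i hi ↦ ?_)
  have hl : 2 * p ≤ 2 * i + 1 := by linarith [(Finset.mem_Ico.1 hi).1]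
  exact_mod_cast oddSqSum_mul_sin_sq_le hl hx hx'

lemma tendsto_sin_mul_div (c : ℝ) : Tendsto (fun x ↦ sin (c * x) / x) (𝓝[≠] 0) (𝓝 c) := by
  have hd : HasDerivAt (fun x ↦ sin (c * x)) c 0 := by
    simpa using ((hasDerivAt_id (0 : ℝ)).const_mul c).sin
  rw [hasDerivAt_iff_tendsto_slope] at hd
  refine hd.congr' ?_
  filter_upwards [self_mem_nhdsWithin] with x hx
  simp [slope_def_field]

lemma tendsto_oddSinSqSum_div_sq (p : ℕ) :
    Tendsto (fun x ↦ oddSinSqSum p x / x ^ 2) (𝓝[≠] 0) (𝓝 (oddSqSum p)) := by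
  have h := tendsto_finsetSum (Finset.range p) fun (i : ℕ) _ ↦
    (tendsto_sin_mul_div (2 * i + 1)).pow 2
  refine h.congr fun x ↦ ?_
  simp only [oddSinSqSum, Finset.sum_div, div_pow]

lemma isGLB_oddSinSqSum_div {p q : ℕ} (hpq : p < q) :
    IsGLB ((fun t ↦ oddSinSqSum p (t / 2) / oddSinSqSum q (t / 2)) '' Ioo 0 π)
      (oddSqSum p / oddSqSum q) := by
  have hq : 0 < q := p.zero_le.trans_lt hpq
  have hQ := oddSqSum_pos hq
  refine isGLB_of_mem_closure ?_ ?_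
  · rintro _ ⟨t, ⟨ht0, htπ⟩, rfl⟩
    rw [div_le_div_iff₀ hQ (oddSinSqSum_pos hq (by linarith) (by linarith))]
    linarith [oddSqSum_mul_oddSinSqSum_le hpq.le (x := t / 2) (by linarith) (by linarith)]
  · have hratio : Tendsto (fun x ↦ oddSinSqSum p x / oddSinSqSum q x) (𝓝[≠] 0)
        (𝓝 (oddSqSum p / oddSqSum q)) := by
      refine ((tendsto_oddSinSqSum_div_sq p).div (tendsto_oddSinSqSum_div_sq q) hQ.ne').congr' ?_
      filter_upwards [self_mem_nhdsWithin] with x hx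
      exact div_div_div_cancel_right₀ (pow_ne_zero 2 hx) _ _
    have hhalf : Tendsto (fun t : ℝ ↦ t / 2) (𝓝[>] 0) (𝓝[≠] 0) :=
      tendsto_nhdsWithin_iff.2 ⟨((continuous_id.div_const 2).tendsto' 0 0 (by simp)).mono_left
        nhdsWithin_le_nhds, by filter_upwards [self_mem_nhdsWithin] with t (ht : 0 < t)
          using (half_pos ht).ne'⟩
    exact mem_closure_of_tendsto (hratio.comp hhalf) <| by
      filter_upwards [Ioo_mem_nhdsGT pi_pos] with t ht using mem_image_of_mem _ ht

theorem stmt_1_general (m n : ℕ) (hnm : n < m) (hme : Even m) (hne : Even n) :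
    sInf ((fun t : ℝ =>
        ((n : ℝ) * Real.sin t - Real.sin ((n : ℝ) * t)) /
          ((m : ℝ) * Real.sin t - Real.sin ((m : ℝ) * t))) '' Set.Ioo 0 π) =
      ((n : ℝ) ^ 3 - n) / ((m : ℝ) ^ 3 - m) := by
  obtain ⟨p, rfl⟩ := hne
  obtain ⟨q, rfl⟩ := hme
  push_cast [← two_mul]
  rw [← six_mul_oddSqSum, ← six_mul_oddSqSum, mul_div_mul_left _ _ (by norm_num : (6 : ℝ) ≠ 0),
    ← (isGLB_oddSinSqSum_div (by omega)).csInf_eq ((nonempty_Ioo.2 pi_pos).image _)]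
  congr 1
  refine image_congr fun t ⟨ht0, htπ⟩ ↦ ?_
  have := sin_pos_of_pos_of_lt_pi ht0 htπ
  rw [two_mul_sin_sub_sin_eq, two_mul_sin_sub_sin_eq]
  exact mul_div_mul_left _ _ (by positivity)

theorem stmt_1 (m n : ℕ) (hn : 2 ≤ n) (hnm : n < m) (hme : Even m) (hne : Even n) :
    sInf ((fun t : ℝ =>
        ((n : ℝ) * Real.sin t - Real.sin ((n : ℝ) * t)) /
          ((m : ℝ) * Real.sin t - Real.sin ((m : ℝ) * t))) '' Set.Ioo 0 π) =
      ((n : ℝ) ^ 3 - n) / ((m : ℝ) ^ 3 - m) :=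
  stmt_1_general m n hnm hme hne
end

section
/- Let m > n ≥ 2 be integers with m − n even. Then for every t ∈ (0, π), (m³ − m)·(n·sin t − sin(n t)) ≥ (n³ − n)·(m·sin t − sin(m t)). -/
/-!
Write `F x t = x sin t - sin (x t)` and `a = n + 1`. The addition formulas give
`((n+2)³ - (n+2)) F n - (n³ - n) F (n+2)`
`  = a (sin t (4 (a² - 1) + 2 (a² + 2) cos (a t)) - 6 a cos t sin (a t))`,
so `F n / (n³ - n)` decreases along each parity class as soon as the last bracket is
nonnegative. The reflection `t ↦ π - t` reduces this to `t ≤ π / 2`, with `sin (a t)`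
replaced by `sin v` for some `-π ≤ v ≤ a t`. If `0 < v ≤ π`, then `tan t ≥ t + t³ / 3`
together with a polynomial bound on `sin v` (Taylor bounds up to degree six and the
Cusa–Huygens inequality `3 sin u ≤ u (2 + cos u)`) suffices; otherwise
`sin v > 0` forces `a t ≥ 2π`, and `sin t ≥ t cos t` is enough.
-/

open Real Set

theorem le_of_deriv_nonneg {f : ℝ → ℝ} {a x : ℝ} (hf : Differentiable ℝ f)
    (hf' : ∀ y ∈ Icc a x, 0 ≤ deriv f y) (hax : a ≤ x) : f a ≤ f x :=
  monotoneOn_of_deriv_nonneg (convex_Icc a x) hf.continuous.continuousOn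
    hf.differentiableOn (fun y hy ↦ hf' y (interior_subset hy))
    (left_mem_Icc.2 hax) (right_mem_Icc.2 hax) hax

theorem cos_le_quartic (x : ℝ) : cos x ≤ 1 - x ^ 2 / 2 + x ^ 4 / 24 := by
  suffices h : ∀ y, 0 ≤ y → cos y ≤ 1 - y ^ 2 / 2 + y ^ 4 / 24 by
    simpa [cos_abs, Even.pow_abs (by decide : Even 4)] using h |x| (abs_nonneg x)
  intro y hy
  have := le_of_deriv_nonneg (f := fun x ↦ 1 - x ^ 2 / 2 + x ^ 4 / 24 - cos x) (by fun_prop)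
    (fun x hx ↦ by
      simp (disch := fun_prop)
      nlinarith [sin_ge_sub_cube hx.1]) hy
  norm_num at this
  linarith

theorem sin_le_quintic {x : ℝ} (hx : 0 ≤ x) : sin x ≤ x - x ^ 3 / 6 + x ^ 5 / 120 := by
  have := le_of_deriv_nonneg (f := fun x ↦ x - x ^ 3 / 6 + x ^ 5 / 120 - sin x) (by fun_prop)
    (fun y _ ↦ by
      simp (disch := fun_prop)
      nlinarith [cos_le_quartic y]) hx
  norm_num at this
  linarith

theorem sextic_le_cos (x : ℝ) : 1 - x ^ 2 / 2 + x ^ 4 / 24 - x ^ 6 / 720 ≤ cos x := by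
  suffices h : ∀ y, 0 ≤ y → 1 - y ^ 2 / 2 + y ^ 4 / 24 - y ^ 6 / 720 ≤ cos y by
    simpa [cos_abs, Even.pow_abs (by decide : Even 4), Even.pow_abs (by decide : Even 6)]
      using h |x| (abs_nonneg x)
  intro y hy
  have := le_of_deriv_nonneg (f := fun x ↦ cos x - (1 - x ^ 2 / 2 + x ^ 4 / 24 - x ^ 6 / 720))
    (by fun_prop) (fun x hx ↦ by
      simp (disch := fun_prop)
      nlinarith [sin_le_quintic hx.1]) hy
  norm_num at this
  linarith

theorem mul_cos_le_sin {x : ℝ} (hx₀ : 0 ≤ x) (hx : x ≤ π) : x * cos x ≤ sin x := by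
  have := le_of_deriv_nonneg (f := fun x ↦ sin x - x * cos x) (by fun_prop)
    (fun y hy ↦ by
      simp (disch := fun_prop)
      exact mul_nonneg hy.1 (sin_nonneg_of_nonneg_of_le_pi hy.1 (hy.2.trans hx))) hx₀
  norm_num at this
  linarith

theorem add_cube_div_three_mul_cos_le_sin {x : ℝ} (hx₀ : 0 ≤ x) (hx : x ≤ π / 2) :
    (x + x ^ 3 / 3) * cos x ≤ sin x := by
  have := le_of_deriv_nonneg (f := fun x ↦ sin x - (x + x ^ 3 / 3) * cos x) (by fun_prop)
    (fun y hy ↦ by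
      have hcos : 0 ≤ cos y :=
        cos_nonneg_of_mem_Icc ⟨by linarith [hy.1, pi_pos], hy.2.trans hx⟩
      have hsin := mul_cos_le_sin hy.1 (by linarith [hy.2, pi_pos])
      simp (disch := fun_prop)
      nlinarith [mul_le_mul_of_nonneg_left hsin (by have := hy.1; positivity : 0 ≤ y + y ^ 3 / 3),
        mul_nonneg (pow_nonneg hy.1 4) hcos]) hx₀
  norm_num at this
  linarith

theorem three_mul_sin_le_mul_two_add_cos {u : ℝ} (hu : 0 ≤ u) :
    3 * sin u ≤ u * (2 + cos u) := by
  rcases le_total u 3 with hu3 | hu3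
  · have hc := mul_le_mul_of_nonneg_left (sextic_le_cos u) hu
    have hs := sin_le_quintic hu
    nlinarith [mul_nonneg (pow_nonneg hu 5) (by nlinarith : 0 ≤ 12 - u ^ 2)]
  · nlinarith [sin_le_one u, neg_one_le_cos u]

theorem mul_sin_le_three {u : ℝ} (hu₀ : 0 ≤ u) (hu : u ≤ π) :
    1458 * sin u ≤ (27 * u + u ^ 3) * (32 + 22 * cos u) := by
  rcases le_total u (5 / 2) with hu' | hu'
  · have hc := mul_le_mul_of_nonneg_left (sextic_le_cos u)
      (by positivity : 0 ≤ 22 * (27 * u + u ^ 3))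
    have h4 : u ^ 4 ≤ (5 / 2) ^ 4 := pow_le_pow_left₀ hu₀ hu' 4
    nlinarith [sin_le_quintic hu₀,
      mul_nonneg (pow_nonneg hu₀ 5)
        (by nlinarith [sq_nonneg u] : 0 ≤ 576 + 33 * u ^ 2 - 11 * u ^ 4)]
  -- near `π` the factor `32 + 22 cos u` is small, so expand around `π` instead
  obtain ⟨w, rfl⟩ : ∃ w, u = π - w := ⟨π - u, by ring⟩
  rw [sin_pi_sub, cos_pi_sub]
  have hw₀ : 0 ≤ w := by linarith
  have hw : w ≤ 0.6416 := by linarith [pi_lt_d6]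
  have hw2 : w ^ 2 ≤ 0.412 := by nlinarith
  have hcos : 10 + 11 * w ^ 2 - 11 / 12 * w ^ 4 ≤ 32 - 22 * cos w := by
    nlinarith [cos_le_quartic w]
  have hpos : 0 ≤ 10 + 11 * w ^ 2 - 11 / 12 * w ^ 4 := by nlinarith
  have hcubic : 83.125 ≤ 27 * (π - w) + (π - w) ^ 3 := by
    nlinarith [pow_le_pow_left₀ (by norm_num) hu' 3]
  calc 1458 * sin w ≤ 1458 * w := by linarith [sin_le hw₀]
    _ ≤ 83.125 * (10 + 11 * w ^ 2 - 11 / 12 * w ^ 4) := by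
      nlinarith [sq_nonneg (w - 729 / 883), mul_le_mul_of_nonneg_left hw2 (sq_nonneg w)]
    _ ≤ (27 * (π - w) + (π - w) ^ 3) * (10 + 11 * w ^ 2 - 11 / 12 * w ^ 4) := by gcongr
    _ ≤ (27 * (π - w) + (π - w) ^ 3) * (32 + 22 * -cos w) := by
      nlinarith [mul_le_mul_of_nonneg_left hcos (by linarith : 0 ≤ 27 * (π - w) + (π - w) ^ 3)]

theorem mul_sin_le_of_three_le {a u : ℝ} (ha : 3 ≤ a) (hu₀ : 0 ≤ u) (hu : u ≤ π) :
    18 * a ^ 4 * sin u ≤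
      (3 * a ^ 2 * u + u ^ 3) * (4 * (a ^ 2 - 1) + 2 * (a ^ 2 + 2) * cos u) := by
  have ha9 : 0 ≤ a ^ 2 - 9 := by nlinarith
  -- the case `a = 3` plus nonnegative multiples of `a ^ 2 - 9`
  have e : (3 * a ^ 2 * u + u ^ 3) * (4 * (a ^ 2 - 1) + 2 * (a ^ 2 + 2) * cos u)
        - 18 * a ^ 4 * sin u
      = a ^ 2 / 9 * ((27 * u + u ^ 3) * (32 + 22 * cos u) - 1458 * sin u)
        + 6 * a ^ 2 * (a ^ 2 - 9) * (u * (2 + cos u) - 3 * sin u)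
        + 4 * u ^ 3 / 9 * (a ^ 2 - 9) * (1 - cos u) := by ring
  have h₁ := mul_nonneg (by positivity : 0 ≤ a ^ 2 / 9)
    (sub_nonneg.2 (mul_sin_le_three hu₀ hu))
  have h₂ := mul_nonneg (by positivity : 0 ≤ 6 * a ^ 2 * (a ^ 2 - 9))
    (sub_nonneg.2 (three_mul_sin_le_mul_two_add_cos hu₀))
  have h₃ := mul_nonneg (by positivity : 0 ≤ 4 * u ^ 3 / 9 * (a ^ 2 - 9))
    (sub_nonneg.2 (cos_le_one u))
  linarith

section

variable {a t v : ℝ}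

theorem six_mul_cos_mul_sin_le_of_le_pi (ha : 3 ≤ a) (ht₀ : 0 ≤ t) (ht : t ≤ π / 2)
    (hv₀ : 0 ≤ v) (hv : v ≤ π) (hvt : v ≤ a * t) :
    6 * a * cos t * sin v ≤ sin t * (4 * (a ^ 2 - 1) + 2 * (a ^ 2 + 2) * cos v) := by
  have hB : 0 ≤ 4 * (a ^ 2 - 1) + 2 * (a ^ 2 + 2) * cos v := by nlinarith [neg_one_le_cos v]
  set B := 4 * (a ^ 2 - 1) + 2 * (a ^ 2 + 2) * cos v
  have hcos : 0 ≤ cos t := cos_nonneg_of_mem_Icc ⟨by linarith [pi_pos], ht⟩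
  have hcube : 3 * a ^ 2 * v + v ^ 3 ≤ 3 * a ^ 3 * (t + t ^ 3 / 3) := by
    nlinarith [pow_le_pow_left₀ hv₀ hvt 3]
  have hsin : 6 * a * sin v ≤ (t + t ^ 3 / 3) * B := by
    have hsin_poly := mul_sin_le_of_three_le ha hv₀ hv
    refine le_of_mul_le_mul_left ?_ (by positivity : 0 < 3 * a ^ 3)
    nlinarith [mul_le_mul_of_nonneg_right hcube hB]
  calc 6 * a * cos t * sin v = cos t * (6 * a * sin v) := by ring
    _ ≤ cos t * ((t + t ^ 3 / 3) * B) := by gcongr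
    _ = (t + t ^ 3 / 3) * cos t * B := by ring
    _ ≤ sin t * B := by gcongr; exact add_cube_div_three_mul_cos_le_sin ht₀ ht

theorem six_mul_cos_mul_sin_le_of_two_pi_le (ha : 3 ≤ a) (ht₀ : 0 ≤ t) (ht : t ≤ π / 2)
    (hat : 2 * π ≤ a * t) :
    6 * a * cos t * sin v ≤ sin t * (4 * (a ^ 2 - 1) + 2 * (a ^ 2 + 2) * cos v) := by
  have hcos : 0 ≤ cos t := cos_nonneg_of_mem_Icc ⟨by linarith [pi_pos], ht⟩
  have hsin : 0 ≤ sin t := sin_nonneg_of_nonneg_of_le_pi ht₀ (by linarith [pi_pos])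
  have h4 : 0 ≤ a ^ 2 - 4 := by nlinarith
  -- `a sin t ≥ a t cos t ≥ 2π cos t`, and `4π (a² - 4) ≥ 6 a²` for `a ≥ 3`
  have hmul : 2 * π * cos t ≤ a * sin t := by
    nlinarith [mul_le_mul_of_nonneg_right hat hcos, mul_cos_le_sin ht₀ (by linarith [pi_pos])]
  have hπ : 6 * a ^ 2 ≤ 4 * π * (a ^ 2 - 4) := by nlinarith [pi_gt_d2]
  have key : a * (6 * a * cos t) ≤ a * (2 * (a ^ 2 - 4) * sin t) := by
    nlinarith [mul_le_mul_of_nonneg_right hπ hcos, mul_le_mul_of_nonneg_left hmul h4]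
  have := le_of_mul_le_mul_left key (by linarith)
  nlinarith [mul_nonneg hcos (sub_nonneg.2 (sin_le_one v)),
    mul_nonneg hsin (by nlinarith [neg_one_le_cos v] : 0 ≤ (a ^ 2 + 2) * (1 + cos v))]

theorem six_mul_cos_mul_sin_le (ha : 3 ≤ a) (ht₀ : 0 < t) (ht : t ≤ π / 2)
    (hv : -π ≤ v) (hvt : v ≤ a * t) :
    6 * a * cos t * sin v ≤ sin t * (4 * (a ^ 2 - 1) + 2 * (a ^ 2 + 2) * cos v) := by
  have hcos : 0 ≤ cos t := cos_nonneg_of_mem_Icc ⟨by linarith [pi_pos], ht⟩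
  have hsin : 0 ≤ sin t := sin_nonneg_of_nonneg_of_le_pi ht₀.le (by linarith [pi_pos])
  rcases le_or_gt (sin v) 0 with hsv | hsv
  · have hB : 0 ≤ 4 * (a ^ 2 - 1) + 2 * (a ^ 2 + 2) * cos v := by nlinarith [neg_one_le_cos v]
    nlinarith [mul_nonneg hsin hB, mul_nonneg (by linarith : 0 ≤ 6 * a) hcos]
  have hv₀ : 0 < v := by
    by_contra! h
    linarith [sin_nonpos_of_nonpos_of_neg_pi_le h hv]
  rcases le_or_gt v π with hvπ | hvπ
  · exact six_mul_cos_mul_sin_le_of_le_pi ha ht₀.le ht hv₀.le hvπ hvt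
  · have h2π : 2 * π ≤ v := by
      by_contra! h
      linarith [sin_sub_pi v,
        sin_nonneg_of_nonneg_of_le_pi (x := v - π) (by linarith) (by linarith)]
    exact six_mul_cos_mul_sin_le_of_two_pi_le ha ht₀.le ht (h2π.trans hvt)

end

theorem six_mul_cos_mul_sin_nat_mul_le {a : ℕ} (ha : 3 ≤ a) {t : ℝ} (ht : t ∈ Ioo 0 π) :
    6 * a * cos t * sin (a * t) ≤ sin t * (4 * (a ^ 2 - 1) + 2 * (a ^ 2 + 2) * cos (a * t)) := by
  have ha' : (3 : ℝ) ≤ a := by exact_mod_cast ha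
  rcases le_or_gt t (π / 2) with ht' | ht'
  · exact six_mul_cos_mul_sin_le ha' ht.1 ht' (by nlinarith [pi_pos, ht.1]) le_rfl
  -- reflect `t ↦ π - t`: modulo `2π`, `a t` becomes `-(a s)` or `π - a s`,
  -- according to the parity of `a`
  obtain ⟨s, rfl⟩ : ∃ s, t = π - s := ⟨π - t, by ring⟩
  have hs₀ : 0 < s := by linarith [ht.2]
  have hmod : ((a % 2 : ℕ) : ℝ) ≤ 1 := by
    exact_mod_cast Nat.le_of_lt_succ (Nat.mod_lt a two_pos)
  have hat : a * (π - s) = ((a / 2 : ℕ) : ℝ) * (2 * π) - (a * s - (a % 2 : ℕ) * π) := by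
    have := congrArg (fun k : ℕ ↦ (k : ℝ)) (Nat.div_add_mod a 2)
    push_cast at this
    linear_combination π * this.symm
  have key := six_mul_cos_mul_sin_le ha' hs₀ (by linarith) (v := a * s - (a % 2 : ℕ) * π)
    (by nlinarith [pi_pos]) (by have := pi_pos; simp only [sub_le_self_iff]; positivity)
  rw [hat, sin_nat_mul_two_pi_sub, cos_nat_mul_two_pi_sub, sin_pi_sub, cos_pi_sub]
  linarith

noncomputable def normalizedDefect (x t : ℝ) : ℝ := (x * sin t - sin (x * t)) / (x ^ 3 - x)

theorem normalizedDefect_le_normalizedDefect_iff {x y t : ℝ} (hx : 1 < x) (hy : 1 < y) :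
    normalizedDefect y t ≤ normalizedDefect x t ↔
      (x ^ 3 - x) * (y * sin t - sin (y * t)) ≤ (y ^ 3 - y) * (x * sin t - sin (x * t)) := by
  have cube_sub_pos {z : ℝ} (hz : 1 < z) : 0 < z ^ 3 - z := by
    nlinarith [mul_pos (mul_pos (by linarith : 0 < z) (sub_pos.2 hz)) (by linarith : 0 < z + 1)]
  rw [normalizedDefect, normalizedDefect, div_le_div_iff₀ (cube_sub_pos hy) (cube_sub_pos hx)]
  ring_nf

theorem defect_add_two_identity (x t : ℝ) :
    ((x + 2) ^ 3 - (x + 2)) * (x * sin t - sin (x * t))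
        - (x ^ 3 - x) * ((x + 2) * sin t - sin ((x + 2) * t))
      = (x + 1) * (sin t * (4 * ((x + 1) ^ 2 - 1) + 2 * ((x + 1) ^ 2 + 2) * cos ((x + 1) * t))
          - 6 * (x + 1) * cos t * sin ((x + 1) * t)) := by
  have h₁ : x * t = (x + 1) * t - t := by ring
  have h₂ : (x + 2) * t = (x + 1) * t + t := by ring
  rw [h₁, h₂, sin_sub, sin_add]
  ring

theorem normalizedDefect_add_two_le {n : ℕ} (hn : 2 ≤ n) {t : ℝ} (ht : t ∈ Ioo 0 π) :
    normalizedDefect (n + 2 : ℕ) t ≤ normalizedDefect n t := by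
  have hn' : (2 : ℝ) ≤ n := by exact_mod_cast hn
  have key := six_mul_cos_mul_sin_nat_mul_le (a := n + 1) (by omega) ht
  have hid := defect_add_two_identity n t
  push_cast at key ⊢
  rw [normalizedDefect_le_normalizedDefect_iff (by linarith) (by linarith)]
  nlinarith [mul_nonneg (by linarith : (0 : ℝ) ≤ n + 1) (sub_nonneg.2 key)]

theorem normalizedDefect_add_two_mul_le {n : ℕ} (hn : 2 ≤ n) {t : ℝ} (ht : t ∈ Ioo 0 π)
    (k : ℕ) :
    normalizedDefect (n + 2 * k : ℕ) t ≤ normalizedDefect n t := by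
  induction k with
  | zero => simp
  | succ k ih =>
    rw [show n + 2 * (k + 1) = n + 2 * k + 2 by ring]
    exact (normalizedDefect_add_two_le (by omega) ht).trans ih

theorem stmt_3 (m n : ℕ) (hn : 2 ≤ n) (hnm : n < m) (hpar : Even (m - n)) :
    ∀ t ∈ Set.Ioo (0 : ℝ) π,
      ((m : ℝ) ^ 3 - m) * ((n : ℝ) * Real.sin t - Real.sin ((n : ℝ) * t)) ≥
        ((n : ℝ) ^ 3 - n) * ((m : ℝ) * Real.sin t - Real.sin ((m : ℝ) * t)) := by
  intro t ht
  obtain ⟨k, rfl⟩ : ∃ k, m = n + 2 * k := by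
    obtain ⟨r, hr⟩ := hpar
    exact ⟨r, by omega⟩
  have h := normalizedDefect_add_two_mul_le hn ht k
  have hm : 1 < n + 2 * k := by omega
  rwa [normalizedDefect_le_normalizedDefect_iff (by exact_mod_cast hn) (by exact_mod_cast hm)] at h
end

section
/- Let n ≥ 2 be an integer. Then for every t ∈ (0, π), ((n+2)³ − (n+2))·(n·sin t − sin(n t)) ≥ (n³ − n)·((n+2)·sin t − sin((n+2) t)). Equivalently, A_n(t)/(n³ − n) ≥ A_{n+2}(t)/((n+2)³ − (n+2)) where A_k(t) = k − sin(k t)/sin t. -/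
/-!
Let `P(t) = sinGap n t = 4n(n+2) sin t + n(n-1) sin((n+2)t) - (n+2)(n+3) sin(nt)`. The
difference of the two sides of the cross-multiplied inequality is `(n+1) P(t)`, so it suffices
to show `P ≥ 0` on `(0, π)`. With `x = (n+1)t/2`, `P` is a quadratic form in `(sin x, cos x)`
that is positive semidefinite as soon as `3 cos² t ≤ (n-1)(n+3) sin² t`. Otherwise `t` or
`π - t` is below `3/(n+1)`. Near `0`, `P` increases from `P(0) = 0`, because
`P' = 8n(n+2) sin x (cos t sin x - (n+1)/2 sin t cos x)` and the last factor is nonnegative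
while `x ≤ π`. Near `π`, substituting `t = π - u` gives `P(π - u) = P(u)` for odd `n`, and for
even `n` an expression that splits into nonnegative terms.
-/

open Real Set

lemma le_of_hasDerivAt_nonneg {f f' : ℝ → ℝ} {a b : ℝ} (hab : a ≤ b)
    (hf : ∀ x, HasDerivAt f (f' x) x) (hf' : ∀ x ∈ Icc a b, 0 ≤ f' x) : f a ≤ f b :=
  monotoneOn_of_hasDerivWithinAt_nonneg (convex_Icc a b)
    (fun x _ ↦ (hf x).continuousAt.continuousWithinAt) (fun x _ ↦ (hf x).hasDerivWithinAt)
    (fun x hx ↦ hf' x (interior_subset hx)) (left_mem_Icc.2 hab) (right_mem_Icc.2 hab) hab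

lemma hasDerivAt_sin_const_mul (c x : ℝ) :
    HasDerivAt (fun s ↦ sin (c * s)) (c * cos (c * x)) x := by
  simpa [mul_comm] using ((hasDerivAt_id x).const_mul c).sin

lemma hasDerivAt_cos_const_mul (c x : ℝ) :
    HasDerivAt (fun s ↦ cos (c * s)) (-(c * sin (c * x))) x := by
  simpa [mul_comm] using ((hasDerivAt_id x).const_mul c).cos

lemma mul_sin_mul_cos_le_cos_mul_sin {c t : ℝ} (hc : 1 ≤ c) (ht : 0 ≤ t) (hct : c * t ≤ π) :
    c * sin t * cos (c * t) ≤ cos t * sin (c * t) := by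
  have hderiv : ∀ x, HasDerivAt (fun s ↦ cos s * sin (c * s) - c * sin s * cos (c * s))
      ((c ^ 2 - 1) * (sin x * sin (c * x))) x := fun x ↦
    (((hasDerivAt_cos x).mul (hasDerivAt_sin_const_mul c x)).sub
      (((hasDerivAt_sin x).const_mul c).mul (hasDerivAt_cos_const_mul c x))).congr_deriv
      (by ring)
  have hmono := le_of_hasDerivAt_nonneg ht hderiv fun x ⟨hx0, hxt⟩ ↦ by
    have hcx : c * x ≤ π := (mul_le_mul_of_nonneg_left hxt (by linarith)).trans hct
    have hsin := sin_nonneg_of_nonneg_of_le_pi hx0 (by nlinarith)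
    have hsin_mul := sin_nonneg_of_nonneg_of_le_pi (by positivity) hcx
    have hc2 : 0 ≤ c ^ 2 - 1 := by nlinarith
    positivity
  simpa using hmono

noncomputable def sinGap (n t : ℝ) : ℝ :=
  4 * n * (n + 2) * sin t + n * (n - 1) * sin ((n + 2) * t) - (n + 2) * (n + 3) * sin (n * t)

lemma hasDerivAt_sinGap (n t : ℝ) :
    HasDerivAt (sinGap n)
      (8 * n * (n + 2) * sin ((n + 1) / 2 * t) *
        (cos t * sin ((n + 1) / 2 * t) - (n + 1) / 2 * sin t * cos ((n + 1) / 2 * t))) t := by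
  refine ((((hasDerivAt_sin t).const_mul _).add
    ((hasDerivAt_sin_const_mul (n + 2) t).const_mul _)).sub
    ((hasDerivAt_sin_const_mul n t).const_mul _)).congr_deriv ?_
  set y := (n + 1) / 2 * t
  have h1 : (n + 2) * t = 2 * y + t := by ring
  have h2 : n * t = 2 * y - t := by ring
  rw [h1, h2, cos_add, cos_sub, sin_two_mul, cos_two_mul]
  linear_combination (-8 * n * (n + 2) * cos t) * sin_sq_add_cos_sq y

lemma sinGap_nonneg_of_mul_le {n t : ℝ} (hn : 1 ≤ n) (ht : 0 ≤ t)
    (hnt : (n + 1) * t ≤ 2 * π) : 0 ≤ sinGap n t := by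
  have hmono := le_of_hasDerivAt_nonneg ht (hasDerivAt_sinGap n) fun x ⟨hx0, hxt⟩ ↦ by
    have hy : (n + 1) / 2 * x ≤ π := by nlinarith
    have hsin := sin_nonneg_of_nonneg_of_le_pi (by positivity) hy
    have hfactor := sub_nonneg.2 (mul_sin_mul_cos_le_cos_mul_sin (by linarith) hx0 hy)
    positivity
  simpa [sinGap] using hmono

lemma quadratic_form_nonneg {a b c : ℝ} (ha : 0 ≤ a) (hc : 0 ≤ c) (hb : b ^ 2 ≤ a * c)
    (x y : ℝ) : 0 ≤ a * x ^ 2 - 2 * b * x * y + c * y ^ 2 := by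
  rcases ha.eq_or_lt with rfl | ha
  · have : b = 0 := by nlinarith
    subst this
    nlinarith [mul_nonneg hc (sq_nonneg y)]
  · refine nonneg_of_mul_nonneg_right ?_ ha
    nlinarith [sq_nonneg (a * x - b * y), mul_nonneg (sub_nonneg.2 hb) (sq_nonneg y)]

lemma sinGap_eq_quadratic_form (n t : ℝ) :
    sinGap n t = 2 * (n - 1) * (n + 3) * sin t * sin ((n + 1) / 2 * t) ^ 2
      - 2 * (6 * (n + 1) * cos t) * sin ((n + 1) / 2 * t) * cos ((n + 1) / 2 * t)
      + 6 * (n + 1) ^ 2 * sin t * cos ((n + 1) / 2 * t) ^ 2 := by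
  set y := (n + 1) / 2 * t
  have h1 : (n + 2) * t = 2 * y + t := by ring
  have h2 : n * t = 2 * y - t := by ring
  rw [sinGap, h1, h2, sin_add, sin_sub, sin_two_mul, cos_two_mul]
  linear_combination (-(2 * n ^ 2 + 4 * n - 6) * sin t) * sin_sq_add_cos_sq y

lemma sinGap_nonneg_of_cos_sq_le {n t : ℝ} (hn : 1 ≤ n) (ht : 0 ≤ sin t)
    (hcos : 3 * cos t ^ 2 ≤ (n - 1) * (n + 3) * sin t ^ 2) : 0 ≤ sinGap n t := by
  have : 0 ≤ n - 1 := by linarith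
  rw [sinGap_eq_quadratic_form]
  refine quadratic_form_nonneg (by positivity) (by positivity) ?_ _ _
  nlinarith [sq_nonneg (n + 1)]

lemma sinGap_pi_sub (n : ℕ) (u : ℝ) :
    sinGap n (π - u) = 4 * n * (n + 2) * sin u
      - (-1) ^ n * (n * (n - 1) * sin ((n + 2) * u) - (n + 2) * (n + 3) * sin (n * u)) := by
  have h1 : ((n : ℝ) + 2) * (π - u) = ((n + 2 : ℕ) : ℝ) * π - (n + 2) * u := by push_cast; ring
  have h2 : (n : ℝ) * (π - u) = (n : ℝ) * π - n * u := by ring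
  rw [sinGap, h1, h2, sin_nat_mul_pi_sub, sin_nat_mul_pi_sub, sin_pi_sub, pow_add]
  ring

lemma reflected_sinGap_nonneg {n u : ℝ} (hn : 1 ≤ n) (hu : 0 ≤ u) (hnu : (n + 1) * u ≤ π) :
    0 ≤ 4 * n * (n + 2) * sin u - n * (n - 1) * sin ((n + 2) * u)
      + (n + 2) * (n + 3) * sin (n * u) := by
  set v := (n + 1) * u
  have h1 : (n + 2) * u = v + u := by ring
  have h2 : n * u = v - u := by ring
  have hsu : 0 ≤ sin u := sin_nonneg_of_nonneg_of_le_pi hu (by nlinarith)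
  have hcu : 0 ≤ cos u := cos_nonneg_of_mem_Icc ⟨by linarith [pi_pos], by nlinarith⟩
  have hsv : 0 ≤ sin v := sin_nonneg_of_nonneg_of_le_pi (by positivity) hnu
  have hcv : 0 ≤ 1 - cos v := sub_nonneg.2 (cos_le_one v)
  rw [h1, h2, sin_add, sin_sub]
  calc (0 : ℝ) ≤ 6 * (n + 1) * sin v * cos u + (2 * n ^ 2 + 4 * n + 6) * sin u * (1 - cos v)
        + 2 * (n - 1) * (n + 3) * sin u := by
        have : 0 ≤ n - 1 := by linarith
        positivity
    _ = _ := by ring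

lemma sinGap_pi_sub_nonneg {n : ℕ} (hn : 1 ≤ n) {u : ℝ} (hu : 0 ≤ u)
    (hnu : (n + 1) * u ≤ π) : 0 ≤ sinGap n (π - u) := by
  have hn' : (1 : ℝ) ≤ n := by exact_mod_cast hn
  rw [sinGap_pi_sub]
  rcases n.even_or_odd with he | ho
  · rw [he.neg_one_pow]
    linarith [reflected_sinGap_nonneg hn' hu hnu]
  · rw [ho.neg_one_pow]
    have := sinGap_nonneg_of_mul_le hn' hu (by linarith [pi_pos])
    rw [sinGap] at this
    linarith

lemma add_one_mul_lt_three {n t : ℝ} (hn : 2 ≤ n) (ht : 0 < t) (htπ : t < π) (hcos : 0 < cos t)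
    (h : (n - 1) * (n + 3) * sin t ^ 2 < 3 * cos t ^ 2) : (n + 1) * t < 3 := by
  have htπ2 : t < π / 2 := by
    by_contra! h'
    linarith [cos_nonpos_of_pi_div_two_le_of_le h' (by linarith)]
  have htan : t * cos t ≤ sin t := by
    have := le_tan ht.le htπ2
    rwa [tan_eq_sin_div_cos, le_div_iff₀ hcos] at this
  have hsq : (n - 1) * (n + 3) * t ^ 2 < 3 := by
    have : (n - 1) * (n + 3) * (t * cos t) ^ 2 ≤ (n - 1) * (n + 3) * sin t ^ 2 := by
      gcongr
      nlinarith
    nlinarith [pow_pos hcos 2]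
  have h9 : 5 * (n + 1) ^ 2 ≤ 9 * ((n - 1) * (n + 3)) := by nlinarith
  nlinarith [mul_le_mul_of_nonneg_right h9 (sq_nonneg t)]

lemma sinGap_nonneg {n : ℕ} (hn : 2 ≤ n) {t : ℝ} (ht0 : 0 < t) (htπ : t < π) :
    0 ≤ sinGap n t := by
  have hn' : (2 : ℝ) ≤ n := by exact_mod_cast hn
  have hsin := sin_pos_of_pos_of_lt_pi ht0 htπ
  rcases le_or_gt (3 * cos t ^ 2) ((n - 1) * (n + 3) * sin t ^ 2) with hquad | hsmall
  · exact sinGap_nonneg_of_cos_sq_le (by linarith) hsin.le hquad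
  have hcos : cos t ≠ 0 := by
    rintro h
    rw [h] at hsmall
    have : (0 : ℝ) < n - 1 := by linarith
    have : 0 < ((n : ℝ) - 1) * (n + 3) * sin t ^ 2 := by positivity
    linarith
  rcases hcos.lt_or_gt with hneg | hpos
  · have hu := add_one_mul_lt_three hn' (sub_pos.2 htπ) (by linarith) (by rw [cos_pi_sub]; linarith)
      (by rwa [sin_pi_sub, cos_pi_sub, neg_sq])
    simpa using sinGap_pi_sub_nonneg (by omega) (sub_pos.2 htπ).le (hu.le.trans pi_gt_three.le)
  · have ht := add_one_mul_lt_three hn' ht0 htπ hpos hsmall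
    exact sinGap_nonneg_of_mul_le (by linarith) ht0.le (by linarith [pi_gt_three])

theorem stmt_7 (n : ℕ) (hn : 2 ≤ n) :
    ∀ t ∈ Set.Ioo (0 : ℝ) π,
      (((n : ℝ) + 2) ^ 3 - ((n : ℝ) + 2)) *
          ((n : ℝ) * Real.sin t - Real.sin ((n : ℝ) * t)) ≥
        ((n : ℝ) ^ 3 - n) *
          (((n : ℝ) + 2) * Real.sin t - Real.sin (((n : ℝ) + 2) * t)) ∧
      ((n : ℝ) - Real.sin ((n : ℝ) * t) / Real.sin t) / ((n : ℝ) ^ 3 - n) ≥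
        (((n : ℝ) + 2) - Real.sin (((n : ℝ) + 2) * t) / Real.sin t) /
          (((n : ℝ) + 2) ^ 3 - ((n : ℝ) + 2)) := by
  rintro t ⟨ht0, htπ⟩
  have hn' : (2 : ℝ) ≤ n := by exact_mod_cast hn
  have hsin := sin_pos_of_pos_of_lt_pi ht0 htπ
  have hcross : (((n : ℝ) + 2) ^ 3 - ((n : ℝ) + 2)) * ((n : ℝ) * sin t - sin ((n : ℝ) * t)) ≥
      ((n : ℝ) ^ 3 - n) * (((n : ℝ) + 2) * sin t - sin (((n : ℝ) + 2) * t)) := by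
    have hgap := mul_nonneg (by positivity : (0 : ℝ) ≤ n + 1) (sinGap_nonneg hn ht0 htπ)
    rw [sinGap] at hgap
    linarith
  refine ⟨hcross, ?_⟩
  have hA (k : ℝ) : k - sin (k * t) / sin t = (k * sin t - sin (k * t)) / sin t := by
    field_simp
  have ha : (0 : ℝ) < (n : ℝ) ^ 3 - n := by nlinarith [pow_le_pow_left₀ (by norm_num) hn' 2]
  have hb : (0 : ℝ) < ((n : ℝ) + 2) ^ 3 - ((n : ℝ) + 2) := by nlinarith
  rw [ge_iff_le, div_le_div_iff₀ hb ha, hA, hA, div_mul_eq_mul_div, div_mul_eq_mul_div,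
    div_le_div_iff_of_pos_right hsin]
  linarith
end

section
/- Let N ≥ 3 be an integer. Then for every t ∈ (0, π), 2(N² − 1)·sin t − 3N·sin(N t)·cos t + (N² + 2)·cos(N t)·sin t ≥ 0. -/
/-!
Write the expression as `2 (N² - 1) sin t + oscTerm N t`; we show
`|oscTerm N t| ≤ 2 (N² - 1) sin t` on `(0, π)`. As `oscTerm N (π - t) = ± oscTerm N t`, we may
take `t ≤ π / 2`.

Where `(N² - 1) sin² t ≥ 3`, expanding `sin (N t)` and `cos (N t)` around `(N - 1) t`
writes `oscTerm N t` as `β cos ((N - 1) t) - α sin ((N - 1) t)` with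
`(2 (N² - 1) sin t)² - α² - β² = 3 N² ((N² - 1) sin² t - 3) ≥ 0`, and Cauchy–Schwarz
concludes.

Otherwise Jordan's inequality gives `(N² - 1) t² ≤ 15 / 2`, hence `N t ≤ 3`. Then `sin (N t)`
and `cos t` are nonnegative, which gives the upper bound at once, and replacing `sin` and `cos`
by their Taylor polynomials of degree at most six turns the lower bound into a polynomial
inequality.
-/

open Real

theorem nonneg_of_deriv_nonneg {f : ℝ → ℝ} (hf : Differentiable ℝ f) (h0 : f 0 = 0)
    (hf' : ∀ x, 0 < x → 0 ≤ deriv f x) {x : ℝ} (hx : 0 ≤ x) : 0 ≤ f x := by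
  have hmono : MonotoneOn f (Set.Ici 0) :=
    monotoneOn_of_deriv_nonneg (convex_Ici 0) hf.continuous.continuousOn hf.differentiableOn
      (by simpa only [interior_Ici, Set.mem_Ioi] using hf')
  simpa [h0] using hmono Set.self_mem_Ici hx hx

namespace Real

theorem cos_le_taylor_quartic {x : ℝ} (hx : 0 ≤ x) : cos x ≤ 1 - x ^ 2 / 2 + x ^ 4 / 24 := by
  let f (t : ℝ) : ℝ := 1 - t ^ 2 / 2 + t ^ 4 / 24 - cos t
  have hderiv (t : ℝ) : deriv f t = sin t - (t - t ^ 3 / 6) := by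
    simp (disch := fun_prop) [f]
    ring
  have := nonneg_of_deriv_nonneg (f := f) (by fun_prop) (by simp [f])
    (fun t ht => by grind [sin_ge_sub_cube]) hx
  simp only [f] at this
  linarith

theorem sin_le_taylor_quintic {x : ℝ} (hx : 0 ≤ x) : sin x ≤ x - x ^ 3 / 6 + x ^ 5 / 120 := by
  let f (t : ℝ) : ℝ := t - t ^ 3 / 6 + t ^ 5 / 120 - sin t
  have hderiv (t : ℝ) : deriv f t = 1 - t ^ 2 / 2 + t ^ 4 / 24 - cos t := by
    simp (disch := fun_prop) [f]
    ring
  have := nonneg_of_deriv_nonneg (f := f) (by fun_prop) (by simp [f])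
    (fun t ht => by grind [cos_le_taylor_quartic]) hx
  simp only [f] at this
  linarith

theorem taylor_sextic_le_cos {x : ℝ} (hx : 0 ≤ x) :
    1 - x ^ 2 / 2 + x ^ 4 / 24 - x ^ 6 / 720 ≤ cos x := by
  let f (t : ℝ) : ℝ := cos t - (1 - t ^ 2 / 2 + t ^ 4 / 24 - t ^ 6 / 720)
  have hderiv (t : ℝ) : deriv f t = t - t ^ 3 / 6 + t ^ 5 / 120 - sin t := by
    simp (disch := fun_prop) [f]
    ring
  have := nonneg_of_deriv_nonneg (f := f) (by fun_prop) (by simp [f])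
    (fun t ht => by grind [sin_le_taylor_quintic]) hx
  simp only [f] at this
  linarith

end Real

theorem abs_sub_mul_le_of_sq_add_sq_le {α β A B X : ℝ} (hX : 0 ≤ X)
    (h : α ^ 2 + β ^ 2 ≤ X ^ 2) (hAB : A ^ 2 + B ^ 2 = 1) : |β * B - α * A| ≤ X := by
  apply abs_le_of_sq_le_sq _ hX
  calc (β * B - α * A) ^ 2 ≤ (β * B - α * A) ^ 2 + (β * A + α * B) ^ 2 := by nlinarith
    _ = (α ^ 2 + β ^ 2) * (A ^ 2 + B ^ 2) := by ring
    _ ≤ X ^ 2 := by rw [hAB, mul_one]; exact h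

theorem sq_mul_le_of_sin_sq_mul_le {m t : ℝ} (hm : 0 ≤ m) (ht0 : 0 ≤ t) (ht : t ≤ π / 2)
    (h : m * sin t ^ 2 ≤ 3) : m * t ^ 2 ≤ 15 / 2 := by
  have hjordan : t ≤ π / 2 * sin t := by
    have := mul_le_sin ht0 ht
    rw [div_mul_eq_mul_div, div_le_iff₀ pi_pos] at this
    linarith
  have hsq : t ^ 2 ≤ (π / 2) ^ 2 * sin t ^ 2 := by
    rw [← mul_pow]
    exact pow_le_pow_left₀ ht0 hjordan 2
  have hpi : π ^ 2 < 10 := by nlinarith [pi_lt_d2, pi_pos]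
  calc m * t ^ 2 ≤ m * ((π / 2) ^ 2 * sin t ^ 2) := mul_le_mul_of_nonneg_left hsq hm
    _ = π ^ 2 / 4 * (m * sin t ^ 2) := by ring
    _ ≤ 15 / 2 := by nlinarith

theorem taylor_numerator_nonneg {a y : ℝ} (ha : 9 ≤ a) (hz : y * (a - 1) ≤ 15 / 2) :
    0 ≤ 144 * a ^ 2 - 720 * a + 360 + y * (-12 * a ^ 3 + 24 * a ^ 2 + 60 * a)
      + y ^ 2 * (2 * a ^ 3 - 5 * a ^ 2) := by
  obtain ⟨b, hb, rfl⟩ : ∃ b, 0 ≤ b ∧ a = 9 + b := ⟨a - 9, by linarith, by ring⟩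
  -- With `d = 15/2 - y (a - 1) ≥ 0`, `(a - 1)²` times the polynomial is
  -- `P₀ + P₁ d + P₂ d²`, where `P₀`, `P₁` have nonnegative coefficients in `b = a - 9`.
  have hd : 0 ≤ 15 / 2 - y * (8 + b) := by linarith
  refine (mul_nonneg_iff_of_pos_left (by positivity : (0 : ℝ) < (8 + b) ^ 2)).1 ?_
  have h₀ : 0 ≤ 152829 / 4 + 38367 * b + 45153 / 4 * b ^ 2 + 2637 / 2 * b ^ 3 + 54 * b ^ 4 :=
    by positivity
  have h₁ : 0 ≤ (34317 + 19716 * b + 4089 * b ^ 2 + 366 * b ^ 3 + 12 * b ^ 4)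
      * (15 / 2 - y * (8 + b)) := by positivity
  have h₂ : 0 ≤ (2 * (9 + b) ^ 3 - 5 * (9 + b) ^ 2) * (15 / 2 - y * (8 + b)) ^ 2 :=
    mul_nonneg (by nlinarith [sq_nonneg (9 + b)]) (sq_nonneg _)
  linear_combination h₀ + h₁ + h₂

theorem taylor_bound_nonneg {n t : ℝ} (hn : 3 ≤ n) (ht : 0 ≤ t)
    (hz : (n ^ 2 - 1) * t ^ 2 ≤ 15 / 2) :
    3 * n * ((n * t - (n * t) ^ 3 / 6 + (n * t) ^ 5 / 120) * (1 - t ^ 2 / 2 + t ^ 4 / 24))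
      ≤ (t - t ^ 3 / 6) * (2 * (n ^ 2 - 1)
        + (n ^ 2 + 2) * (1 - (n * t) ^ 2 / 2 + (n * t) ^ 4 / 24 - (n * t) ^ 6 / 720)) := by
  have hG := taylor_numerator_nonneg (a := n ^ 2) (y := t ^ 2) (by nlinarith) (by linarith)
  rw [← sub_nonneg]
  have key : (t - t ^ 3 / 6) * (2 * (n ^ 2 - 1)
        + (n ^ 2 + 2) * (1 - (n * t) ^ 2 / 2 + (n * t) ^ 4 / 24 - (n * t) ^ 6 / 720))
      - 3 * n * ((n * t - (n * t) ^ 3 / 6 + (n * t) ^ 5 / 120) * (1 - t ^ 2 / 2 + t ^ 4 / 24))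
      = n ^ 2 * t ^ 5 / 8640 * (144 * (n ^ 2) ^ 2 - 720 * n ^ 2 + 360
        + t ^ 2 * (-12 * (n ^ 2) ^ 3 + 24 * (n ^ 2) ^ 2 + 60 * n ^ 2)
        + (t ^ 2) ^ 2 * (2 * (n ^ 2) ^ 3 - 5 * (n ^ 2) ^ 2)) := by ring
  rw [key]
  positivity

theorem neg_six_div_five_le_taylor_sextic {x : ℝ} (hx : x ^ 2 ≤ 9) :
    -(6 / 5) ≤ 1 - x ^ 2 / 2 + x ^ 4 / 24 - x ^ 6 / 720 := by
  nlinarith [mul_nonneg (sub_nonneg.2 hx) (add_nonneg (sq_nonneg (x ^ 2 - 21 / 2))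
    (by norm_num : (0 : ℝ) ≤ 243 / 4))]

noncomputable def oscTerm (n t : ℝ) : ℝ :=
  (n ^ 2 + 2) * cos (n * t) * sin t - 3 * n * sin (n * t) * cos t

theorem oscTerm_eq (n t : ℝ) :
    oscTerm n t = (n - 1) * (n - 2) * sin t * cos t * cos ((n - 1) * t)
      - ((n - 1) * (n - 2) * sin t ^ 2 + 3 * n) * sin ((n - 1) * t) := by
  have hnt : n * t = (n - 1) * t + t := by ring
  rw [oscTerm, hnt, sin_add, cos_add]
  linear_combination (-3 * n * sin ((n - 1) * t)) * sin_sq_add_cos_sq t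

theorem oscTerm_pi_sub (N : ℕ) (t : ℝ) : oscTerm N (π - t) = (-1) ^ N * oscTerm N t := by
  have h : (N : ℝ) * (π - t) = N * π - N * t := by ring
  rw [oscTerm, oscTerm, h, sin_nat_mul_pi_sub, cos_nat_mul_pi_sub, sin_pi_sub, cos_pi_sub]
  ring

theorem abs_oscTerm_le_of_three_le {n t : ℝ} (hs : 0 < sin t)
    (h : 3 ≤ (n ^ 2 - 1) * sin t ^ 2) : |oscTerm n t| ≤ 2 * (n ^ 2 - 1) * sin t := by
  rw [oscTerm_eq]
  have hn : 0 < n ^ 2 - 1 := by nlinarith [sq_nonneg (sin t)]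
  refine abs_sub_mul_le_of_sq_add_sq_le (by positivity) ?_ (sin_sq_add_cos_sq _)
  have hgap : (2 * (n ^ 2 - 1) * sin t) ^ 2 - ((n - 1) * (n - 2) * sin t ^ 2 + 3 * n) ^ 2
      - ((n - 1) * (n - 2) * sin t * cos t) ^ 2 = 3 * n ^ 2 * ((n ^ 2 - 1) * sin t ^ 2 - 3) := by
    linear_combination (-((n - 1) ^ 2 * (n - 2) ^ 2 * sin t ^ 2)) * sin_sq_add_cos_sq t
  nlinarith [mul_nonneg (sq_nonneg n) (sub_nonneg.2 h)]

theorem abs_oscTerm_le_of_sq_mul_le {n t : ℝ} (hn : 3 ≤ n) (ht : 0 ≤ t)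
    (hz : (n ^ 2 - 1) * t ^ 2 ≤ 15 / 2) : |oscTerm n t| ≤ 2 * (n ^ 2 - 1) * sin t := by
  have ht2 : t ^ 2 ≤ 15 / 16 := by
    nlinarith [mul_le_mul_of_nonneg_right (show 8 ≤ n ^ 2 - 1 by nlinarith) (sq_nonneg t)]
  have ht1 : t ≤ 1 := by nlinarith
  have hnt0 : 0 ≤ n * t := by positivity
  have hnt2 : (n * t) ^ 2 ≤ 9 := by nlinarith
  have hnt : n * t ≤ 3 := by nlinarith
  have hs : 0 ≤ sin t := sin_nonneg_of_nonneg_of_le_pi ht (by linarith [pi_gt_three])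
  have hc : 0 ≤ cos t :=
    cos_nonneg_of_mem_Icc ⟨by linarith [pi_pos], by linarith [pi_gt_three]⟩
  have hsnt : 0 ≤ sin (n * t) := sin_nonneg_of_nonneg_of_le_pi hnt0 (by linarith [pi_gt_three])
  have hbracket : 0 ≤ 2 * (n ^ 2 - 1)
      + (n ^ 2 + 2) * (1 - (n * t) ^ 2 / 2 + (n * t) ^ 4 / 24 - (n * t) ^ 6 / 720) := by
    nlinarith [neg_six_div_five_le_taylor_sextic hnt2]
  rw [abs_le]
  constructor
  · rw [neg_le_iff_add_nonneg']
    calc 0 ≤ (t - t ^ 3 / 6) * (2 * (n ^ 2 - 1)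
            + (n ^ 2 + 2) * (1 - (n * t) ^ 2 / 2 + (n * t) ^ 4 / 24 - (n * t) ^ 6 / 720))
          - 3 * n * ((n * t - (n * t) ^ 3 / 6 + (n * t) ^ 5 / 120)
            * (1 - t ^ 2 / 2 + t ^ 4 / 24)) :=
          sub_nonneg.2 (taylor_bound_nonneg hn ht hz)
      _ ≤ sin t * (2 * (n ^ 2 - 1) + (n ^ 2 + 2) * cos (n * t))
          - 3 * n * (sin (n * t) * cos t) := by
          gcongr ?_ * (_ + _ * ?_) - _ * (?_ * ?_)
          · exact sin_ge_sub_cube ht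
          · exact taylor_sextic_le_cos hnt0
          · exact hsnt.trans (sin_le_taylor_quintic hnt0)
          · exact sin_le_taylor_quintic hnt0
          · exact cos_le_taylor_quartic ht
      _ = 2 * (n ^ 2 - 1) * sin t + oscTerm n t := by rw [oscTerm]; ring
  · rw [oscTerm]
    have := mul_le_mul_of_nonneg_left (mul_le_mul_of_nonneg_right (cos_le_one (n * t)) hs)
      (by positivity : (0 : ℝ) ≤ n ^ 2 + 2)
    nlinarith [mul_nonneg (by linarith : 0 ≤ 3 * n) (mul_nonneg hsnt hc),
      mul_nonneg (by nlinarith : 0 ≤ n ^ 2 - 4) hs]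

theorem abs_oscTerm_le (N : ℕ) (hN : 3 ≤ N) {t : ℝ} (ht : t ∈ Set.Ioo 0 π) :
    |oscTerm N t| ≤ 2 * ((N : ℝ) ^ 2 - 1) * sin t := by
  obtain ⟨ht0, htπ⟩ := ht
  wlog ht2 : t ≤ π / 2 generalizing t
  · have := this (t := π - t) (by linarith) (by linarith) (by linarith)
    rwa [oscTerm_pi_sub, abs_mul, abs_neg_one_pow, one_mul, sin_pi_sub] at this
  have hn : (3 : ℝ) ≤ N := by exact_mod_cast hN
  rcases le_total 3 (((N : ℝ) ^ 2 - 1) * sin t ^ 2) with h | h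
  · exact abs_oscTerm_le_of_three_le (sin_pos_of_pos_of_lt_pi ht0 htπ) h
  · exact abs_oscTerm_le_of_sq_mul_le hn ht0.le
      (sq_mul_le_of_sin_sq_mul_le (by nlinarith) ht0.le ht2 h)

theorem stmt_8 (N : ℕ) (hN : 3 ≤ N) :
    ∀ t ∈ Set.Ioo (0 : ℝ) π,
      0 ≤ 2 * ((N : ℝ) ^ 2 - 1) * Real.sin t -
          3 * (N : ℝ) * Real.sin ((N : ℝ) * t) * Real.cos t +
          ((N : ℝ) ^ 2 + 2) * Real.cos ((N : ℝ) * t) * Real.sin t := by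
  intro t ht
  have hsplit : 2 * ((N : ℝ) ^ 2 - 1) * sin t - 3 * N * sin (N * t) * cos t
      + (N ^ 2 + 2) * cos (N * t) * sin t = 2 * ((N : ℝ) ^ 2 - 1) * sin t + oscTerm N t := by
    rw [oscTerm]; ring
  rw [hsplit]
  linarith [neg_abs_le (oscTerm N t), abs_oscTerm_le N hN ht]
end

section
/- Let n ≥ 2 be an integer and let z ∈ ℂ satisfy (n+1)·z^{2n−2} − 4(2n−1)·z^{n−1} + (2n−1)(3n−1) = 0. Then |z|^{2n−2} = (2n−1)(3n² + 2n − 1)/(n+1)², and in particular |z| > 1. -/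
/-!
Put `w = z ^ (n - 1)`: then `w` is a root of the real quadratic
`(n + 1) X² - 4 (2n - 1) X + (2n - 1)(3n - 1)`, whose discriminant `-12 (2n - 1)(n - 1)²` is
negative for `n ≥ 2`. So `w` is not real, `w̄` is the other root, and Vieta gives
`|z| ^ (2n - 2) = w w̄ = (2n - 1)(3n - 1) / (n + 1)`, which exceeds `1`.
-/

open Complex

theorem Complex.normSq_eq_div_of_quadratic_eq_zero {a b c : ℝ} {w : ℂ}
    (hd : discrim a b c < 0) (hw : a * w ^ 2 + b * w + c = 0) :
    normSq w = c / a := by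
  have ha : a ≠ 0 := by
    rintro rfl
    exact (sq_nonneg b).not_gt (by simpa [discrim] using hd)
  have hre : a * (w.re ^ 2 - w.im ^ 2) + b * w.re + c = 0 := by
    simpa [pow_two] using congrArg re hw
  have him : w.im * (2 * a * w.re + b) = 0 := by
    have := congrArg im hw
    simp only [pow_two, add_im, mul_im, ofReal_re, ofReal_im, zero_im] at this
    linarith
  have h_nonreal : w.im ≠ 0 := by
    intro h0
    have := discrim_eq_sq_of_quadratic_eq_zero (a := a) (b := b) (c := c) (x := w.re)
      (by rw [h0] at hre; linarith)
    exact hd.not_ge (this ▸ sq_nonneg _)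
  have hvieta : 2 * a * w.re + b = 0 := (mul_eq_zero.1 him).resolve_left h_nonreal
  rw [normSq_apply, eq_div_iff ha]
  linear_combination w.re * hvieta - hre

theorem stmt_9 (n : ℕ) (hn : 2 ≤ n) (z : ℂ)
    (hz : ((n : ℂ) + 1) * z ^ (2 * n - 2) - 4 * (2 * (n : ℂ) - 1) * z ^ (n - 1) +
        (2 * (n : ℂ) - 1) * (3 * (n : ℂ) - 1) = 0) :
    ‖z‖ ^ (2 * n - 2) =
        (2 * (n : ℝ) - 1) * (3 * (n : ℝ) ^ 2 + 2 * n - 1) / ((n : ℝ) + 1) ^ 2 ∧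
      1 < ‖z‖ := by
  have hN : (2 : ℝ) ≤ n := by exact_mod_cast hn
  have hexp : 2 * n - 2 = (n - 1) * 2 := by omega
  have hdisc : discrim ((n : ℝ) + 1) (-4 * (2 * n - 1)) ((2 * n - 1) * (3 * n - 1)) < 0 := by
    rw [discrim]
    nlinarith [mul_pos (by linarith : (0 : ℝ) < 2 * n - 1) (by nlinarith : (0 : ℝ) < (n - 1) ^ 2)]
  have hnorm : ‖z‖ ^ (2 * n - 2) = (2 * n - 1) * (3 * n - 1) / ((n : ℝ) + 1) := by
    rw [hexp, pow_mul, ← norm_pow, Complex.sq_norm]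
    refine normSq_eq_div_of_quadratic_eq_zero hdisc ?_
    rw [hexp, pow_mul] at hz
    push_cast
    linear_combination hz
  have hvalue : (2 * (n : ℝ) - 1) * (3 * n - 1) / (n + 1) =
      (2 * n - 1) * (3 * n ^ 2 + 2 * n - 1) / (n + 1) ^ 2 := by
    field_simp
    ring
  have hgt : 1 < ‖z‖ ^ (2 * n - 2) := by
    rw [hnorm, one_lt_div (by positivity)]
    nlinarith
  exact ⟨hnorm.trans hvalue, (one_lt_pow_iff_of_nonneg (norm_nonneg z) (by omega)).1 hgt⟩
end

section
/- Let n ≥ 2 be an integer and define f : ℂ → ℂ by f(z) = z − (4/(3n−1))·zⁿ + ((n+1)/((2n−1)(3n−1)))·z^{2n−1}. Then for every z ∈ ℂ with |z| = 1 one has f(z) ≠ 0 and Re( z·f′(z)/f(z) ) ≥ 0. -/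
/-!
With `w = z ^ (n - 1)`, which lies on the unit circle together with `z`, one has
`(2n-1)(3n-1) f(z) = z P(w)` and `(2n-1)(3n-1) f'(z) = Q(w)` for the real quadratics
`P = valueFactor n` and `Q = derivFactor n`, so `z f'(z) / f(z) = Q(w) / P(w)`.
On `|w| = 1` a direct computation gives
`Re (Q(w) · conj P(w)) = 4n(2n-1)(3n-1)(n+1)(1 - Re w)²`.
This is the sign of `Re (Q(w) / P(w))`, and it also shows `P(w) ≠ 0`: otherwise `Re w = 1`,
so `w = 1`, but `P(1) = 6(n-1)² > 0`.
-/

open ComplexConjugate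

namespace StarlikeTrinomial

noncomputable def starlikePoly (n : ℕ) (z : ℂ) : ℂ :=
  z - (4 / (3 * (n : ℂ) - 1)) * z ^ n +
    (((n : ℂ) + 1) / ((2 * (n : ℂ) - 1) * (3 * (n : ℂ) - 1))) * z ^ (2 * n - 1)

def valueFactor (N : ℝ) (w : ℂ) : ℂ :=
  (2 * N - 1) * (3 * N - 1) - 4 * (2 * N - 1) * w + (N + 1) * w ^ 2

def derivFactor (N : ℝ) (w : ℂ) : ℂ :=
  (2 * N - 1) * ((3 * N - 1) - 4 * N * w + (N + 1) * w ^ 2)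

lemma re_derivFactor_mul_conj_valueFactor (N : ℝ) {w : ℂ} (hw : ‖w‖ = 1) :
    (derivFactor N w * conj (valueFactor N w)).re =
      4 * N * (2 * N - 1) * (3 * N - 1) * (N + 1) * (1 - w.re) ^ 2 := by
  have hxy : w.re ^ 2 + w.im ^ 2 = 1 := by
    have h := Complex.sq_norm w
    rw [hw, Complex.normSq_apply] at h
    linarith
  simp only [derivFactor, valueFactor, Complex.mul_re, Complex.mul_im, Complex.conj_re,
    Complex.conj_im, Complex.sub_re, Complex.sub_im, Complex.add_re, Complex.add_im,
    Complex.ofReal_re, Complex.ofReal_im, Complex.re_ofNat, Complex.im_ofNat, Complex.one_re,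
    Complex.one_im, pow_two]
  linear_combination ((2 * N ^ 3 + 3 * N ^ 2 - 1) * (w.re ^ 2 + w.im ^ 2)
    + (-24 * N ^ 3 - 4 * N ^ 2 + 16 * N - 4) * w.re
    + (-12 * N ^ 4 + 64 * N ^ 3 - 53 * N ^ 2 + 14 * N - 1)) * hxy

lemma valueFactor_one (N : ℝ) : valueFactor N 1 = ((6 * (N - 1) ^ 2 : ℝ) : ℂ) := by
  simp only [valueFactor]; push_cast; ring

open scoped ComplexOrder in
lemma eq_one_of_norm_eq_one_of_re_eq_one {w : ℂ} (hw : ‖w‖ = 1) (hre : w.re = 1) : w = 1 := by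
  have hnonneg : 0 ≤ w := Complex.re_eq_norm.1 (by rw [hre, hw])
  exact Complex.ext hre (Complex.nonneg_iff.1 hnonneg).2.symm

lemma starCoeff_pos {N : ℝ} (hN : 1 / 2 < N) :
    0 < 4 * N * (2 * N - 1) * (3 * N - 1) * (N + 1) :=
  mul_pos (mul_pos (mul_pos (by linarith) (by linarith)) (by linarith)) (by linarith)

lemma valueFactor_ne_zero {N : ℝ} (hN : 1 < N) {w : ℂ} (hw : ‖w‖ = 1) : valueFactor N w ≠ 0 := by
  intro h
  have hre := re_derivFactor_mul_conj_valueFactor N hw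
  rw [h, map_zero, mul_zero, Complex.zero_re, eq_comm] at hre
  have hw1 : w = 1 := by
    refine eq_one_of_norm_eq_one_of_re_eq_one hw ?_
    have := (mul_eq_zero.1 hre).resolve_left (starCoeff_pos (by linarith)).ne'
    linarith [pow_eq_zero_iff two_ne_zero |>.1 this]
  rw [hw1, valueFactor_one, Complex.ofReal_eq_zero] at h
  linarith [pow_pos (sub_pos.2 hN) 2]

lemma zero_le_re_derivFactor_div_valueFactor {N : ℝ} (hN : 1 / 2 < N) {w : ℂ} (hw : ‖w‖ = 1) :
    0 ≤ (derivFactor N w / valueFactor N w).re := by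
  rw [div_eq_mul_inv, Complex.inv_def, ← mul_assoc, Complex.re_mul_ofReal,
    re_derivFactor_mul_conj_valueFactor N hw]
  exact mul_nonneg (mul_nonneg (starCoeff_pos hN).le (sq_nonneg _))
    (inv_nonneg.2 (Complex.normSq_nonneg _))

lemma two_mul_natCast_sub_one_ne_zero (n : ℕ) : 2 * (n : ℂ) - 1 ≠ 0 := by
  exact_mod_cast (by omega : (2 * n : ℤ) - 1 ≠ 0)

lemma three_mul_natCast_sub_one_ne_zero (n : ℕ) : 3 * (n : ℂ) - 1 ≠ 0 := by
  exact_mod_cast (by omega : (3 * n : ℤ) - 1 ≠ 0)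

lemma starlikePoly_eq {n : ℕ} (hn : 1 ≤ n) (z : ℂ) :
    starlikePoly n z =
      z / ((2 * (n : ℂ) - 1) * (3 * (n : ℂ) - 1)) * valueFactor n (z ^ (n - 1)) := by
  have hzn : z ^ n = z ^ (n - 1) * z := by rw [← pow_succ, Nat.sub_add_cancel hn]
  have hz2n : z ^ (2 * n - 1) = (z ^ (n - 1)) ^ 2 * z := by
    rw [← pow_mul, ← pow_succ]; congr 1; omega
  have h2 := two_mul_natCast_sub_one_ne_zero n
  have h3 := three_mul_natCast_sub_one_ne_zero n
  simp only [starlikePoly, valueFactor, Complex.ofReal_natCast, hzn, hz2n]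
  -- the identity holds for any nonzero values of the two denominators
  generalize 2 * (n : ℂ) - 1 = a at h2 ⊢
  generalize 3 * (n : ℂ) - 1 = b at h3 ⊢
  field_simp

lemma hasDerivAt_starlikePoly {n : ℕ} (hn : 1 ≤ n) (z : ℂ) :
    HasDerivAt (starlikePoly n)
      (derivFactor n (z ^ (n - 1)) / ((2 * (n : ℂ) - 1) * (3 * (n : ℂ) - 1))) z := by
  have hd : HasDerivAt (starlikePoly n) (1 - 4 / (3 * (n : ℂ) - 1) * (n * z ^ (n - 1)) +
      (n + 1) / ((2 * n - 1) * (3 * n - 1)) * ((2 * n - 1 : ℕ) * z ^ (2 * n - 1 - 1))) z :=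
    ((hasDerivAt_id z).sub ((hasDerivAt_pow n z).const_mul _)).add
      ((hasDerivAt_pow (2 * n - 1) z).const_mul _)
  refine hd.congr_deriv ?_
  have hz2n : z ^ (2 * n - 1 - 1) = (z ^ (n - 1)) ^ 2 := by rw [← pow_mul]; congr 1; omega
  have hcast : ((2 * n - 1 : ℕ) : ℂ) = 2 * n - 1 := by
    rw [Nat.cast_sub (by omega)]; push_cast; ring
  have h2 := two_mul_natCast_sub_one_ne_zero n
  have h3 := three_mul_natCast_sub_one_ne_zero n
  simp only [derivFactor, Complex.ofReal_natCast, hz2n, hcast]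
  generalize 2 * (n : ℂ) - 1 = a at h2 ⊢
  generalize 3 * (n : ℂ) - 1 = b at h3 ⊢
  field_simp

lemma mul_deriv_div_starlikePoly {n : ℕ} (hn : 1 ≤ n) {z : ℂ} (hz : z ≠ 0) :
    z * deriv (starlikePoly n) z / starlikePoly n z =
      derivFactor n (z ^ (n - 1)) / valueFactor n (z ^ (n - 1)) := by
  have hc := mul_ne_zero (two_mul_natCast_sub_one_ne_zero n) (three_mul_natCast_sub_one_ne_zero n)
  rw [(hasDerivAt_starlikePoly hn z).deriv, starlikePoly_eq hn, ← mul_comm_div,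
    mul_div_mul_left _ _ (div_ne_zero hz hc)]

end StarlikeTrinomial

open StarlikeTrinomial in
theorem stmt_10 (n : ℕ) (hn : 2 ≤ n) (f : ℂ → ℂ)
    (hf : ∀ z : ℂ, f z =
      z - (4 / (3 * (n : ℂ) - 1)) * z ^ n +
        (((n : ℂ) + 1) / ((2 * (n : ℂ) - 1) * (3 * (n : ℂ) - 1))) * z ^ (2 * n - 1)) :
    ∀ z : ℂ, ‖z‖ = 1 → f z ≠ 0 ∧ 0 ≤ (z * deriv f z / f z).re := by
  obtain rfl : f = starlikePoly n := funext hf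
  intro z hz
  have hz0 : z ≠ 0 := norm_ne_zero_iff.1 (hz ▸ one_ne_zero)
  have hw : ‖z ^ (n - 1)‖ = 1 := by rw [norm_pow, hz, one_pow]
  have hN : 1 < (n : ℝ) := by exact_mod_cast hn
  have hc := mul_ne_zero (two_mul_natCast_sub_one_ne_zero n) (three_mul_natCast_sub_one_ne_zero n)
  refine ⟨?_, ?_⟩
  · rw [starlikePoly_eq (by omega)]
    exact mul_ne_zero (div_ne_zero hz0 hc) (valueFactor_ne_zero hN hw)
  · rw [mul_deriv_div_starlikePoly (by omega) hz0]
    exact zero_le_re_derivFactor_div_valueFactor (by linarith) hw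
end

section
/- For every real w > 0, −w²·∫₀¹ (1−u)²/(1+4uw) du − 2w³·∫₀¹ ∫₀ᵘ (3 + 1/(1+4vw))·(1−u)(1−v)/(√(1+4uw)·√(1+4vw)) dv du = (1+4w)·(√(1+4w) − 1 − 2w)/6. -/
/-!
Both integrals have elementary antiderivatives. Put `a = 1 + 4w` and `V = 1 + 4vw`; then
`1 - v = (a - V) / (4w)`, so the inner integrand is a combination of `V^(-3/2)`, `V^(-1/2)` and
`V^(1/2)`, and after the inner integration the outer integrand is a combination of powers of
`U = 1 + 4uw`, `U^(±1/2)` and `1/U`. The `log (1 + 4w)` terms of the two parts cancel exactly,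
which leaves an algebraic expression in `√(1 + 4w)`.
-/

open Real Set intervalIntegral

section

variable {w : ℝ}

lemma hasDerivAt_one_add_four_mul (t : ℝ) : HasDerivAt (fun t => 1 + 4 * t * w) (4 * w) t := by
  simpa using (((hasDerivAt_id t).const_mul 4).mul_const w).const_add 1

lemma hasDerivAt_sqrt_one_add_four_mul {t : ℝ} (ht : 1 + 4 * t * w ≠ 0) :
    HasDerivAt (fun t => √(1 + 4 * t * w)) (2 * w / √(1 + 4 * t * w)) t := by
  convert (hasDerivAt_one_add_four_mul t).sqrt ht using 1
  field_simp
  ring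

noncomputable def innerAntideriv (w v : ℝ) : ℝ :=
  ((3 * (1 + 4 * w) - 1 - (1 + 4 * v * w)) * √(1 + 4 * v * w) -
    (1 + 4 * w) / √(1 + 4 * v * w)) / (8 * w ^ 2)

lemma hasDerivAt_innerAntideriv (hw : w ≠ 0) {v : ℝ} (hv : 0 < 1 + 4 * v * w) :
    HasDerivAt (innerAntideriv w) ((3 + 1 / (1 + 4 * v * w)) * (1 - v) / √(1 + 4 * v * w)) v := by
  have hS := hasDerivAt_sqrt_one_add_four_mul hv.ne'
  have hs : 0 < √(1 + 4 * v * w) := sqrt_pos.2 hv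
  refine ((((hasDerivAt_one_add_four_mul v).const_sub (3 * (1 + 4 * w) - 1)).mul hS).sub
    ((hasDerivAt_const v (1 + 4 * w)).div hS hs.ne')).div_const (8 * w ^ 2) |>.congr_deriv ?_
  have hs2 : √(1 + 4 * v * w) ^ 2 = 1 + 4 * v * w := sq_sqrt hv.le
  -- with `s = √(1 + 4vw)` and `v = (s² - 1) / (4w)` the identity becomes rational in `s`
  generalize √(1 + 4 * v * w) = s at *
  rw [← hs2]
  obtain rfl : v = (s ^ 2 - 1) / (4 * w) := by field_simp; linarith
  field_simp
  ring

lemma innerAntideriv_zero (hw : w ≠ 0) : innerAntideriv w 0 = 1 / w := by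
  simp only [innerAntideriv, mul_zero, zero_mul, add_zero, sqrt_one, div_one, mul_one]
  field_simp
  ring

lemma integral_inner_eq_innerAntideriv (hw : 0 < w) {u : ℝ} (hu : 0 ≤ u) :
    ∫ v in (0 : ℝ)..u, (3 + 1 / (1 + 4 * v * w)) * ((1 - u) * (1 - v)) /
        (√(1 + 4 * u * w) * √(1 + 4 * v * w)) =
      (1 - u) / √(1 + 4 * u * w) * (innerAntideriv w u - innerAntideriv w 0) := by
  rw [mul_sub]
  refine integral_eq_sub_of_hasDerivAt (f := fun v => _ * innerAntideriv w v)
    (fun v hv => ?_) ?_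
  · have hv : 0 ≤ v := (le_min le_rfl hu).trans hv.1
    exact ((hasDerivAt_innerAntideriv hw.ne' (by positivity)).const_mul _).congr_deriv (by ring)
  · refine ContinuousOn.intervalIntegrable ?_
    rw [uIcc_of_le hu]
    fun_prop (disch := rintro v ⟨hv, -⟩; positivity)

noncomputable def quadAntideriv (w u : ℝ) : ℝ :=
  ((1 + 4 * w) ^ 2 * log (1 + 4 * u * w) - 2 * (1 + 4 * w) * (1 + 4 * u * w) +
    (1 + 4 * u * w) ^ 2 / 2) / (64 * w ^ 3)

lemma hasDerivAt_quadAntideriv (hw : w ≠ 0) {u : ℝ} (hu : 0 < 1 + 4 * u * w) :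
    HasDerivAt (quadAntideriv w) ((1 - u) ^ 2 / (1 + 4 * u * w)) u := by
  have h := hasDerivAt_one_add_four_mul (w := w) u
  refine ((((h.log hu.ne').const_mul ((1 + 4 * w) ^ 2)).sub (h.const_mul (2 * (1 + 4 * w)))).add
    ((h.pow 2).div_const 2)).div_const (64 * w ^ 3) |>.congr_deriv ?_
  have hU := hu.ne'
  generalize hUu : 1 + 4 * u * w = U at hU ⊢
  obtain rfl : u = (U - 1) / (4 * w) := by field_simp; linarith
  field_simp
  ring

noncomputable def outerAntideriv (w u : ℝ) : ℝ :=
  ((1 + 4 * u * w) ^ 3 / 3 - (4 * (1 + 4 * w) - 1) * (1 + 4 * u * w) ^ 2 / 2 +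
      3 * (1 + 4 * w) ^ 2 * (1 + 4 * u * w) - (1 + 4 * w) ^ 2 * log (1 + 4 * u * w)) /
        (128 * w ^ 4) -
    (2 * (1 + 4 * w) * √(1 + 4 * u * w) - 2 / 3 * ((1 + 4 * u * w) * √(1 + 4 * u * w))) /
      (16 * w ^ 3)

lemma hasDerivAt_outerAntideriv (hw : w ≠ 0) {u : ℝ} (hu : 0 < 1 + 4 * u * w) :
    HasDerivAt (outerAntideriv w)
      ((1 - u) / √(1 + 4 * u * w) * (innerAntideriv w u - innerAntideriv w 0)) u := by
  have h := hasDerivAt_one_add_four_mul (w := w) u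
  have hS := hasDerivAt_sqrt_one_add_four_mul hu.ne'
  refine ((((((h.pow 3).div_const 3).sub
    (((h.pow 2).const_mul (4 * (1 + 4 * w) - 1)).div_const 2)).add
    (h.const_mul (3 * (1 + 4 * w) ^ 2))).sub ((h.log hu.ne').const_mul ((1 + 4 * w) ^ 2))).div_const
      (128 * w ^ 4)).sub (((hS.const_mul (2 * (1 + 4 * w))).sub
        ((h.mul hS).const_mul (2 / 3))).div_const (16 * w ^ 3)) |>.congr_deriv ?_
  rw [innerAntideriv_zero hw, innerAntideriv]
  have hs : 0 < √(1 + 4 * u * w) := sqrt_pos.2 hu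
  have hs2 : √(1 + 4 * u * w) ^ 2 = 1 + 4 * u * w := sq_sqrt hu.le
  generalize √(1 + 4 * u * w) = s at *
  rw [← hs2]
  obtain rfl : u = (s ^ 2 - 1) / (4 * w) := by field_simp; linarith
  field_simp
  ring

lemma integral_quad_eq_quadAntideriv (hw : 0 < w) :
    ∫ u in (0 : ℝ)..1, (1 - u) ^ 2 / (1 + 4 * u * w) =
      quadAntideriv w 1 - quadAntideriv w 0 := by
  refine integral_eq_sub_of_hasDerivAt (fun u hu => ?_) ?_
  · have hu : 0 ≤ u := (le_min le_rfl zero_le_one).trans hu.1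
    exact hasDerivAt_quadAntideriv hw.ne' (by positivity)
  · refine ContinuousOn.intervalIntegrable ?_
    rw [uIcc_of_le zero_le_one]
    fun_prop (disch := rintro u ⟨hu, -⟩; positivity)

lemma integral_double_eq_outerAntideriv (hw : 0 < w) :
    ∫ u in (0 : ℝ)..1, ∫ v in (0 : ℝ)..u, (3 + 1 / (1 + 4 * v * w)) * ((1 - u) * (1 - v)) /
        (√(1 + 4 * u * w) * √(1 + 4 * v * w)) = outerAntideriv w 1 - outerAntideriv w 0 := by
  have h01 : uIcc (0 : ℝ) 1 = Icc 0 1 := uIcc_of_le zero_le_one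
  rw [integral_congr fun u hu => integral_inner_eq_innerAntideriv hw (h01 ▸ hu).1]
  refine integral_eq_sub_of_hasDerivAt (fun u hu => ?_) ?_
  · have hu : 0 ≤ u := (h01 ▸ hu).1
    exact hasDerivAt_outerAntideriv hw.ne' (by positivity)
  · refine ContinuousOn.intervalIntegrable ?_
    rw [h01]
    unfold innerAntideriv
    fun_prop (disch := rintro u ⟨hu, -⟩; positivity)

lemma combination_antiderivs_eq (hw : w ≠ 0) (h : 0 ≤ 1 + 4 * w) :
    -w ^ 2 * (quadAntideriv w 1 - quadAntideriv w 0) -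
        2 * w ^ 3 * (outerAntideriv w 1 - outerAntideriv w 0) =
      (1 + 4 * w) * (√(1 + 4 * w) - 1 - 2 * w) / 6 := by
  simp only [quadAntideriv, outerAntideriv, mul_zero, zero_mul, add_zero, mul_one, log_one,
    sqrt_one]
  have hs2 : √(1 + 4 * w) ^ 2 = 1 + 4 * w := sq_sqrt h
  generalize √(1 + 4 * w) = s at *
  have hs1 : s ^ 2 - 1 ≠ 0 := fun h => hw (by linarith)
  rw [← hs2]
  obtain rfl : w = (s ^ 2 - 1) / 4 := by linarith
  field_simp
  ring

end

theorem stmt_15 (w : ℝ) (hw : 0 < w) :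
    -w ^ 2 * (∫ u in (0 : ℝ)..1, (1 - u) ^ 2 / (1 + 4 * u * w)) -
        2 * w ^ 3 * (∫ u in (0 : ℝ)..1, ∫ v in (0 : ℝ)..u,
          (3 + 1 / (1 + 4 * v * w)) * ((1 - u) * (1 - v)) /
            (Real.sqrt (1 + 4 * u * w) * Real.sqrt (1 + 4 * v * w))) =
      (1 + 4 * w) * (Real.sqrt (1 + 4 * w) - 1 - 2 * w) / 6 := by
  rw [integral_quad_eq_quadAntideriv hw, integral_double_eq_outerAntideriv hw]
  exact combination_antiderivs_eq hw.ne' (by positivity)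
end

section
/- Let m ≥ 2 be an even integer and n ≥ 3 an odd integer. Then the infimum of the set of values (n·sin t − sin(n t))/(m·sin t − sin(m t)) as t ranges over the open interval (0, π) equals 0. -/
/-!
Both `k sin t - sin (k t)` are nonnegative on `(0, π)` since `|sin (k t)| ≤ k |sin t|`, so the
infimum is at least `0`. Near `t = π`, write `t = π - s`: because `n` is odd and `m` is even, the
numerator becomes `n sin s - sin (n s) = O(s³)` while the denominator becomes
`m sin s + sin (m s) ≥ 2 m s / π`, so the quotient is `O(s²)` and tends to `0` as `s → 0⁺`.
-/

open Real Set Filter Topology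

noncomputable def bombieriQuotient (m n : ℕ) (t : ℝ) : ℝ :=
  ((n : ℝ) * sin t - sin ((n : ℝ) * t)) / ((m : ℝ) * sin t - sin ((m : ℝ) * t))

lemma abs_sin_nat_mul_le (k : ℕ) (x : ℝ) : |sin (k * x)| ≤ k * |sin x| := by
  induction k with
  | zero => simp
  | succ k ih =>
    have hsplit : |sin (k * x) * cos x + cos (k * x) * sin x| ≤ |sin (k * x)| + |sin x| := by
      refine (abs_add_le _ _).trans (add_le_add ?_ ?_) <;> rw [abs_mul]
      · exact mul_le_of_le_one_right (abs_nonneg _) (abs_cos_le_one x)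
      · exact mul_le_of_le_one_left (abs_nonneg _) (abs_cos_le_one _)
    push_cast
    rw [add_mul, one_mul, sin_add]
    linarith

lemma sin_nat_mul_le_nat_mul_sin (k : ℕ) {x : ℝ} (hx₀ : 0 ≤ x) (hxπ : x ≤ π) :
    sin (k * x) ≤ k * sin x := by
  have h := abs_sin_nat_mul_le k x
  rw [abs_of_nonneg (sin_nonneg_of_nonneg_of_le_pi hx₀ hxπ)] at h
  exact (le_abs_self _).trans h

lemma nat_mul_sin_sub_sin_nat_mul_le (k : ℕ) {x : ℝ} (hx : 0 ≤ x) :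
    k * sin x - sin (k * x) ≤ (k * x) ^ 3 / 6 := by
  have h₁ : k * sin x ≤ k * x := mul_le_mul_of_nonneg_left (sin_le hx) k.cast_nonneg
  have h₂ := sin_ge_sub_cube (mul_nonneg k.cast_nonneg hx)
  linarith

lemma sin_nat_mul_pi_sub_of_odd {k : ℕ} (hk : Odd k) (x : ℝ) :
    sin (k * (π - x)) = sin (k * x) := by
  rw [mul_sub, sin_nat_mul_pi_sub, hk.neg_one_pow]
  ring

lemma sin_nat_mul_pi_sub_of_even {k : ℕ} (hk : Even k) (x : ℝ) :
    sin (k * (π - x)) = -sin (k * x) := by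
  rw [mul_sub, sin_nat_mul_pi_sub, hk.neg_one_pow]
  ring

lemma mul_le_nat_mul_sin_add_sin_nat_mul {k : ℕ} (hk : 2 ≤ k) {x : ℝ} (hx₀ : 0 ≤ x)
    (hxπ : k * x ≤ π) : 2 / π * (k * x) ≤ k * sin x + sin (k * x) := by
  have hk₂ : (2 : ℝ) ≤ k := by exact_mod_cast hk
  have hx : x ≤ π / 2 := by nlinarith
  have hjordan := mul_le_sin hx₀ hx
  have hsin : 0 ≤ sin (k * x) := sin_nonneg_of_nonneg_of_le_pi (by positivity) hxπ
  have hrearrange : 2 / π * (k * x) = k * (2 / π * x) := by ring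
  nlinarith

lemma bombieriQuotient_nonneg (m n : ℕ) {t : ℝ} (ht : t ∈ Ioo 0 π) :
    0 ≤ bombieriQuotient m n t :=
  div_nonneg (sub_nonneg.2 (sin_nat_mul_le_nat_mul_sin n ht.1.le ht.2.le))
    (sub_nonneg.2 (sin_nat_mul_le_nat_mul_sin m ht.1.le ht.2.le))

lemma bombieriQuotient_pi_sub_le {m n : ℕ} (hm : 2 ≤ m) (hme : Even m) (hno : Odd n) {s : ℝ}
    (hs₀ : 0 < s) (hsπ : m * s ≤ π) :
    bombieriQuotient m n (π - s) ≤ π * n ^ 3 / (12 * m) * s ^ 2 := by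
  have hm₀ : (0 : ℝ) < m := by positivity
  have hden : 0 < 2 / π * (m * s) := by positivity
  calc bombieriQuotient m n (π - s)
      = (n * sin s - sin (n * s)) / (m * sin s + sin (m * s)) := by
        rw [bombieriQuotient, sin_pi_sub, sin_nat_mul_pi_sub_of_odd hno,
          sin_nat_mul_pi_sub_of_even hme, sub_neg_eq_add]
    _ ≤ (n * s) ^ 3 / 6 / (2 / π * (m * s)) :=
        div_le_div₀ (by positivity) (nat_mul_sin_sub_sin_nat_mul_le n hs₀.le) hden
          (mul_le_nat_mul_sin_add_sin_nat_mul hm hs₀.le hsπ)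
    _ = π * n ^ 3 / (12 * m) * s ^ 2 := by
        field_simp
        ring

lemma tendsto_bombieriQuotient_pi_sub {m n : ℕ} (hm : 2 ≤ m) (hme : Even m) (hno : Odd n) :
    Tendsto (fun s ↦ bombieriQuotient m n (π - s)) (𝓝[>] 0) (𝓝 0) := by
  have hm₀ : (0 : ℝ) < m := by positivity
  have hbound : Tendsto (fun s : ℝ ↦ π * n ^ 3 / (12 * m) * s ^ 2) (𝓝[>] 0) (𝓝 0) :=
    tendsto_nhdsWithin_of_tendsto_nhds
      ((continuous_const.mul (continuous_pow 2)).tendsto' 0 0 (by simp))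
  refine tendsto_of_tendsto_of_tendsto_of_le_of_le' tendsto_const_nhds hbound ?_ ?_ <;>
    filter_upwards [Ioo_mem_nhdsGT (div_pos pi_pos hm₀)] with s ⟨hs₀, hsπ⟩
  · have hm₁ : (1 : ℝ) ≤ m := by exact_mod_cast one_le_two.trans hm
    have hsπ' : s < π := hsπ.trans_le (div_le_self pi_pos.le hm₁)
    exact bombieriQuotient_nonneg m n ⟨by linarith, by linarith⟩
  · exact bombieriQuotient_pi_sub_le hm hme hno hs₀ ((lt_div_iff₀' hm₀).1 hsπ).le

theorem stmt_17_general (m n : ℕ) (hm : 2 ≤ m) (hme : Even m) (hno : Odd n) :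
    sInf ((fun t : ℝ =>
        ((n : ℝ) * Real.sin t - Real.sin ((n : ℝ) * t)) /
          ((m : ℝ) * Real.sin t - Real.sin ((m : ℝ) * t))) '' Set.Ioo 0 π) = 0 := by
  change sInf (bombieriQuotient m n '' Ioo 0 π) = 0
  have hnonneg : ∀ q ∈ bombieriQuotient m n '' Ioo 0 π, 0 ≤ q := by
    rintro _ ⟨t, ht, rfl⟩
    exact bombieriQuotient_nonneg m n ht
  have hne : (bombieriQuotient m n '' Ioo 0 π).Nonempty :=
    (nonempty_Ioo.2 pi_pos).image _
  refine le_antisymm ?_ (le_csInf hne hnonneg)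
  refine ge_of_tendsto (tendsto_bombieriQuotient_pi_sub hm hme hno) ?_
  filter_upwards [Ioo_mem_nhdsGT pi_pos] with s ⟨hs₀, hsπ⟩
  exact csInf_le ⟨0, hnonneg⟩ ⟨π - s, ⟨by linarith, by linarith⟩, rfl⟩

theorem stmt_17 (m n : ℕ) (hm : 2 ≤ m) (hme : Even m) (hn : 3 ≤ n) (hno : Odd n) :
    sInf ((fun t : ℝ =>
        ((n : ℝ) * Real.sin t - Real.sin ((n : ℝ) * t)) /
          ((m : ℝ) * Real.sin t - Real.sin ((m : ℝ) * t))) '' Set.Ioo 0 π) = 0 :=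
  stmt_17_general m n hm hme hno
end
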